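/- arXiv:2010.08787 — 4 statements merged into one kernel-verified Lean document; each statement's English description precedes it below -/
import Mathlib

section
/- Assume q ≠ 1. Then the following are equivalent: (a) c_S ≥ 6 c_F; (b) for every n ∈ ℕ, every wetting configuration D^w_n ⊂ ∂L_{FS} with #D^w_n = n satisfies both (i) V_n(D^w_n) = min{V_n(D) : D ∈ C_n} and (ii) V_n(D^w_n) < V_n(D_n) for every D_n ∈ C_n with D_n \ ∂L_{FS} ≠ ∅. -/
open scoped BigOperators Classical Topology ENNReal
open Filter MeasureTheory

noncomputable section

/-!
Common setting: film lattice `L_F` with parameter `e_F = 1`, substrate spacing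
`e_S = q/p` (`p, q` coprime positive integers), Heitmann–Radin potentials and the
configurational energy `V_n` (with values in `EReal`, since the Heitmann–Radin
potential takes the value `+∞` below distance `1`).
-/

/-- Points of the plane. -/
abbrev Pt : Type := ℝ × ℝ

/-- The lattice vector `t₁ = (1,0)`. -/
def t1 : Pt := ((1 : ℝ), (0 : ℝ))

/-- The lattice vector `t₂ = (1/2, √3/2)`. -/
def t2 : Pt := ((1 / 2 : ℝ), Real.sqrt 3 / 2)

/-- Euclidean distance on `ℝ × ℝ`. -/
def dE (x y : Pt) : ℝ := Real.sqrt ((x.1 - y.1) ^ 2 + (x.2 - y.2) ^ 2)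

/-- Substrate lattice spacing `e_S = q / p`. -/
def eS (p q : ℕ) : ℝ := (q : ℝ) / (p : ℝ)

/-- The film lattice `L_F = {(0, e_S) + k₁ t₁ + k₂ t₂ : k₁ ∈ ℤ, k₂ ∈ ℕ ∪ {0}}`. -/
def LF (p q : ℕ) : Set Pt :=
  {x | ∃ (k₁ : ℤ) (k₂ : ℕ), x = (((0 : ℝ), eS p q) : Pt) + (k₁ : ℝ) • t1 + (k₂ : ℝ) • t2}

/-- The set `∂L_{FS} = {(k q, e_S) : k ∈ ℤ}` of lower-boundary film sites lying at
distance `e_S` above a substrate atom. -/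
def bLFS (p q : ℕ) : Set Pt := {x | ∃ k : ℤ, x = (((k : ℝ) * (q : ℝ), eS p q) : Pt)}

/-- Crystalline configurations with `n` atoms: subsets of `L_F` of cardinality `n`. -/
def Cn (p q n : ℕ) : Set (Finset Pt) := {D | ↑D ⊆ LF p q ∧ D.card = n}

/-- The Heitmann–Radin sticky-disc potential: `+∞` for `r < 1`, `-c_F` at `r = 1`,
`0` for `r > 1`. -/
def vF (cF : ℝ) (r : ℝ) : EReal :=
  if r < 1 then (⊤ : EReal) else if r = 1 then ((-cF : ℝ) : EReal) else (0 : EReal)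

/-- The one-body substrate potential `v¹`: `-c_S` on `∂L_{FS}`, `0` otherwise. -/
def v1 (cS : ℝ) (p q : ℕ) (x : Pt) : ℝ := if x ∈ bLFS p q then -cS else 0

/-- The total energy `V_n(D) = Σ_{(x,y) ∈ D×D, x ≠ y} v_F(|x-y|) + Σ_{x ∈ D} v¹(x)`. -/
def Vn (cF cS : ℝ) (p q : ℕ) (D : Finset Pt) : EReal :=
  (∑ e ∈ D.offDiag, vF cF (dE e.1 e.2)) + (((∑ x ∈ D, v1 cS p q x) : ℝ) : EReal)

/-- The dewetting condition: `c_S < 4c_F` if `q = 1` and `c_S < 6c_F` if `q ≠ 1`. -/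
def Dewetting (cF cS : ℝ) (q : ℕ) : Prop := if q = 1 then cS < 4 * cF else cS < 6 * cF

/-- The boundary `∂D` of a configuration: atoms with fewer than `6` film neighbours. -/
def bdry (D : Finset Pt) : Finset Pt :=
  D.filter fun x => (D.filter fun y => dE x y = 1).card < 6

/-- The empirical measure `μ_{D_n} = (1/n) Σ_{x ∈ D_n} δ_{x/√n}`. -/
def emp (n : ℕ) (D : Finset Pt) : Measure Pt :=
  ((n : ℝ≥0∞))⁻¹ • ∑ x ∈ D, Measure.dirac (((Real.sqrt n)⁻¹ : ℝ) • x)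

/-- A configuration of `n` consecutive sites `{w, w + t₁, …, w + (n-1) t₁}` on `∂L_{FS}`. -/
def IsConsecutive (p q n : ℕ) (Dw : Finset Pt) : Prop :=
  ∃ w : Pt, w ∈ bLFS p q ∧ Dw = (Finset.range n).image fun i => w + (i : ℝ) • t1

/-- Two atoms joined by a chain of atoms of `D` with consecutive distances `1`. -/
def chainConn (D : Finset Pt) (x y : Pt) : Prop :=
  Relation.ReflTransGen (fun a b => a ∈ D ∧ b ∈ D ∧ dE a b = 1) x y

/-- Connectedness of a configuration. -/
def IsConnectedConf (D : Finset Pt) : Prop := ∀ x ∈ D, ∀ y ∈ D, chainConn D x y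

/-- `C` is a connected component of `D` (the set of atoms of `D` chain-connected to
some atom of `D`). -/
def IsComponent (D C : Finset Pt) : Prop :=
  ∃ x ∈ D, ∀ y : Pt, y ∈ C ↔ y ∈ D ∧ chainConn D x y

/-- Almost-connectedness: connected if `q = 1`; if `q ≠ 1`, the connected components
can be enumerated so that each one is at distance at most `q` from the union of the
previous ones. -/
def AlmostConnected (q : ℕ) (D : Finset Pt) : Prop :=
  if q = 1 then IsConnectedConf D
  else
    ∃ (k : ℕ) (f : Fin k → Finset Pt),
      Function.Injective f ∧
      (∀ i, IsComponent D (f i)) ∧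
      (∀ C : Finset Pt, IsComponent D C → ∃ i, C = f i) ∧
      (∀ i : Fin k, 1 ≤ (i : ℕ) →
        ∃ x ∈ f i, ∃ j : Fin k, j < i ∧ ∃ y ∈ f j, dE x y ≤ (q : ℝ))

/-- Local energy `E_loc(x)` of a site with respect to the configuration `D`. -/
def Eloc (cF : ℝ) (D : Finset Pt) (x : Pt) : ℝ :=
  if x ∈ D then cF * (6 - ((D.filter fun y => dE x y = 1).card : ℝ)) else 0

/-- Height `y_M` of the topmost atom of `D` in the column of `x`. -/
def yM (D : Finset Pt) (x : Pt) : ℝ := sSup {y : ℝ | ((x.1, y) : Pt) ∈ D}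

/-- The strip top `x̃ = (x¹, y_M)`. -/
def til (D : Finset Pt) (x : Pt) : Pt := (x.1, yM D x)

/-- The weight `w₊(x̃)`. -/
def wPlus (p q : ℕ) (D : Finset Pt) (x : Pt) : ℝ :=
  if x + t1 ∈ D ∧ x + t1 ∈ bLFS p q ∧ til D x + t2 = til D (x + t1) + t2 - t1 then 1 / 2 else 1

/-- The weight `w₋(x̃)`. -/
def wMinus (p q : ℕ) (D : Finset Pt) (x : Pt) : ℝ :=
  if x - t1 ∈ D ∧ x - t1 ∈ bLFS p q ∧ til D x + t2 - t1 = til D (x - t1) + t2 then 1 / 2 else 1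

/-- Lower strip energy `E_strip,below(x)`. -/
def EStripBelow (cF cS : ℝ) (p q : ℕ) (D : Finset Pt) (x : Pt) : ℝ :=
  if q = 1 then
    (1 / 2) * Eloc cF D x + (1 / 4) * Eloc cF D (x + t1) + (1 / 4) * Eloc cF D (x - t1) - cS
  else
    Eloc cF D x + (1 / 2) * Eloc cF D (x + t1) + (1 / 2) * Eloc cF D (x - t1) - cS

/-- Upper strip energy `E_strip,above(x)`. -/
def EStripAbove (cF : ℝ) (p q : ℕ) (D : Finset Pt) (x : Pt) : ℝ :=
  (if til D x ≠ x then Eloc cF D (til D x) else 0) +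
    wPlus p q D x * Eloc cF D (til D x + t2) +
    wMinus p q D x * Eloc cF D (til D x + t2 - t1)

/-- The strip energy `E_strip(x) = E_strip,below(x) + E_strip,above(x)`. -/
def EStrip (cF cS : ℝ) (p q : ℕ) (D : Finset Pt) (x : Pt) : ℝ :=
  EStripBelow cF cS p q D x + EStripAbove cF p q D x

/-- `Δ_strip`: `4c_F - c_S` if `q = 1`, `6c_F - c_S` if `q ≠ 1`. -/
def DeltaStrip (cF cS : ℝ) (q : ℕ) : ℝ := if q = 1 then 4 * cF - cS else 6 * cF - cS

/-- The union `S(∂L_{FS})` of all strips of the configuration `D`. -/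
def SLFS (p q : ℕ) (D : Finset Pt) : Finset Pt :=
  D.filter fun y => ∃ x, x ∈ D ∧ x ∈ bLFS p q ∧
    (y = x ∨ y = x + t1 ∨ y = x - t1 ∨ y = til D x ∨ y = til D x + t2 ∨ y = til D x + t2 - t1)

/-- The rescaled energy `E_n(μ_{D_n}) = n^{-1/2} (V_n(D_n) + 6 c_F n)`. -/
def En (cF cS : ℝ) (p q n : ℕ) (D : Finset Pt) : EReal :=
  ((((Real.sqrt n)⁻¹ : ℝ)) : EReal) * (Vn cF cS p q D + ((6 * cF * (n : ℝ) : ℝ) : EReal))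

/-!
In lattice coordinates `v ∈ ℤ × ℤ` the bonds are the pairs whose difference has `hexNorm` one.
For a configuration of `n` atoms, `m` of them on `∂L_{FS}`, let `Δ` count the pairs (atom,
direction `d ∈ {(1,0), (0,1), (-1,1)}`) such that the site `v - d` is empty; by translation
invariance the number of ordered bonds is `6n - 2Δ`, so
`V = -c_S n + (c_S - 6 c_F)(n - m) + 2 c_F (Δ - 3m)`.
A bottom-row atom has both lower sites empty, and as `q ≥ 2` a substrate atom either has an empty
left site or its left neighbour is a bottom atom off the substrate. Hence `Δ ≥ 3m`, strictly as soon
as some atom leaves the substrate (if not in the bottom row, the leftmost atom of its row has an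
empty left site). This gives the wetting regime for `c_S ≥ 6 c_F`; if `c_S < 6 c_F`, a `k × k`
rhombus above the substrate has `m = 0`, `Δ ≤ 9k`, and beats the wetting configuration for large `k`.
-/

open Finset

theorem Finset.offDiag_image_of_injective {α β : Type*} [DecidableEq α] [DecidableEq β]
    {f : α → β} (hf : Function.Injective f) (s : Finset α) :
    (s.image f).offDiag = s.offDiag.image (Prod.map f f) := by
  ext ⟨x, y⟩
  simp only [mem_offDiag, mem_image, Prod.exists, Prod.map, Prod.mk.injEq]
  constructor
  · rintro ⟨⟨a, ha, rfl⟩, ⟨b, hb, rfl⟩, hne⟩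
    exact ⟨a, b, ⟨ha, hb, fun h => hne (h ▸ rfl)⟩, rfl, rfl⟩
  · rintro ⟨a, b, ⟨ha, hb, hne⟩, rfl, rfl⟩
    exact ⟨⟨a, ha, rfl⟩, ⟨b, hb, rfl⟩, hf.ne hne⟩

namespace FilmLattice

def latticePt (p q : ℕ) (v : ℤ × ℤ) : Pt := ((0 : ℝ), eS p q) + (v.1 : ℝ) • t1 + (v.2 : ℝ) • t2

def OnSubstrate (q : ℕ) (v : ℤ × ℤ) : Prop := v.2 = 0 ∧ (q : ℤ) ∣ v.1

/-- The squared length of `w.1 • t₁ + w.2 • t₂`. -/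
def hexNorm (w : ℤ × ℤ) : ℤ := w.1 ^ 2 + w.1 * w.2 + w.2 ^ 2

def unitDirs : Finset (ℤ × ℤ) := {(1, 0), (-1, 0), (0, 1), (0, -1), (1, -1), (-1, 1)}

section Coordinates

variable {p q : ℕ}

@[simp]
lemma latticePt_fst (v : ℤ × ℤ) : (latticePt p q v).1 = v.1 + v.2 / 2 := by
  simp [latticePt, t1, t2]; ring

@[simp]
lemma latticePt_snd (v : ℤ × ℤ) : (latticePt p q v).2 = eS p q + v.2 * (Real.sqrt 3 / 2) := by
  simp [latticePt, t1, t2]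

lemma latticePt_injective : Function.Injective (latticePt p q) := by
  rintro ⟨a, b⟩ ⟨c, d⟩ h
  have h3 : Real.sqrt 3 / 2 ≠ 0 := by positivity
  have h1 := congrArg Prod.fst h
  have h2 := congrArg Prod.snd h
  simp only [latticePt_fst, latticePt_snd] at h1 h2
  have hbd : (b : ℝ) = d := mul_right_cancel₀ h3 (by linarith)
  have hac : (a : ℝ) = c := by linarith
  simp only [Prod.mk.injEq]
  exact ⟨mod_cast hac, mod_cast hbd⟩

lemma mem_LF_iff {x : Pt} : x ∈ LF p q ↔ ∃ v : ℤ × ℤ, 0 ≤ v.2 ∧ latticePt p q v = x := by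
  constructor
  · rintro ⟨k₁, k₂, rfl⟩
    exact ⟨(k₁, k₂), by positivity, by simp [latticePt]⟩
  · rintro ⟨⟨a, b⟩, hb, rfl⟩
    lift b to ℕ using hb
    exact ⟨a, b, by simp [latticePt]⟩

lemma latticePt_mem_bLFS_iff {v : ℤ × ℤ} : latticePt p q v ∈ bLFS p q ↔ OnSubstrate q v := by
  have h3 : Real.sqrt 3 / 2 ≠ 0 := by positivity
  simp only [bLFS, OnSubstrate, Set.mem_ofPred_eq, Prod.ext_iff, latticePt_fst, latticePt_snd,
    add_eq_left, mul_eq_zero, h3, or_false, Int.cast_eq_zero]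
  constructor
  · rintro ⟨k, h1, h2⟩
    simp only [h2, Int.cast_zero, zero_div, add_zero] at h1
    exact ⟨h2, k, by rw [mul_comm]; exact_mod_cast h1⟩
  · rintro ⟨h2, k, hk⟩
    exact ⟨k, by simp [h2, hk, mul_comm], h2⟩

lemma bLFS_subset_LF : bLFS p q ⊆ LF p q := by
  rintro x ⟨k, rfl⟩
  exact mem_LF_iff.2 ⟨(k * q, 0), le_rfl, by ext <;> simp⟩

lemma exists_image_latticePt {D : Finset Pt} (hD : ↑D ⊆ LF p q) :
    ∃ K : Finset (ℤ × ℤ), (∀ v ∈ K, 0 ≤ v.2) ∧ K.image (latticePt p q) = D := by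
  refine ⟨D.preimage (latticePt p q) latticePt_injective.injOn, fun v hv => ?_, ?_⟩
  · obtain ⟨w, hw, hwv⟩ := mem_LF_iff.1 (hD (mem_preimage.1 hv))
    rwa [← latticePt_injective hwv]
  · rw [image_preimage, filter_true_of_mem]
    intro x hx
    obtain ⟨w, -, hw⟩ := mem_LF_iff.1 (hD hx)
    exact ⟨w, hw⟩

lemma dE_latticePt (u v : ℤ × ℤ) :
    dE (latticePt p q u) (latticePt p q v) = Real.sqrt (hexNorm (u - v)) := by
  have h3 : Real.sqrt 3 ^ 2 = 3 := Real.sq_sqrt (by norm_num)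
  simp only [dE, latticePt_fst, latticePt_snd, hexNorm, Prod.fst_sub, Prod.snd_sub]
  congr 1
  push_cast
  linear_combination ((v.2 : ℝ) - u.2) ^ 2 / 4 * h3

lemma one_le_hexNorm {w : ℤ × ℤ} (hw : w ≠ 0) : 1 ≤ hexNorm w := by
  obtain ⟨a, b⟩ := w
  have h4 : 4 * hexNorm (a, b) = (2 * a + b) ^ 2 + 3 * b ^ 2 := by simp only [hexNorm]; ring
  rcases eq_or_ne b 0 with rfl | hb
  · have ha : a ≠ 0 := fun ha => hw (by simp [ha])
    simp only [hexNorm]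
    nlinarith [Int.one_le_abs ha, sq_abs a]
  · nlinarith [sq_nonneg (2 * a + b), Int.one_le_abs hb, sq_abs b]

lemma hexNorm_eq_one_iff {w : ℤ × ℤ} : hexNorm w = 1 ↔ w ∈ unitDirs := by
  obtain ⟨a, b⟩ := w
  constructor
  · intro h
    simp only [hexNorm] at h
    have hb1 : -1 ≤ b := by nlinarith [sq_nonneg (2 * a + b)]
    have hb2 : b ≤ 1 := by nlinarith [sq_nonneg (2 * a + b)]
    have ha1 : -1 ≤ a := by nlinarith [sq_nonneg (a + 2 * b)]
    have ha2 : a ≤ 1 := by nlinarith [sq_nonneg (a + 2 * b)]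
    interval_cases a <;> interval_cases b <;> simp_all [unitDirs]
  · intro h
    fin_cases h <;> rfl

end Coordinates

def bondCount (K : Finset (ℤ × ℤ)) : ℕ := #{e ∈ K.offDiag | hexNorm (e.1 - e.2) = 1}

def missing (K : Finset (ℤ × ℤ)) (d : ℤ × ℤ) : ℕ := #{v ∈ K | v - d ∉ K}

def deficit (K : Finset (ℤ × ℤ)) : ℕ := missing K (1, 0) + missing K (0, 1) + missing K (-1, 1)

def substrateCount (q : ℕ) (K : Finset (ℤ × ℤ)) : ℕ := #{v ∈ K | OnSubstrate q v}

section Counting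

variable (K : Finset (ℤ × ℤ))

lemma card_offDiag_filter_sub_eq {d : ℤ × ℤ} (hd : d ≠ 0) :
    #{e ∈ K.offDiag | e.1 - e.2 = d} = #{v ∈ K | v - d ∈ K} := by
  refine card_nbij' Prod.fst (fun v => (v, v - d)) ?_ ?_ ?_ fun _ _ => rfl
  · intro e he
    simp only [coe_filter, mem_offDiag, Set.mem_ofPred_eq] at he ⊢
    obtain ⟨⟨h1, h2, -⟩, rfl⟩ := he
    exact ⟨h1, by simpa using h2⟩
  · intro v hv
    simp only [coe_filter, mem_offDiag, Set.mem_ofPred_eq] at hv ⊢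
    exact ⟨⟨hv.1, hv.2, fun h => hd (sub_eq_self.1 h.symm)⟩, by simp⟩
  · intro e he
    simp only [coe_filter, mem_offDiag, Set.mem_ofPred_eq] at he
    rw [← he.2]
    simp

lemma card_filter_sub_neg_mem (d : ℤ × ℤ) :
    #{v ∈ K | v - -d ∈ K} = #{v ∈ K | v - d ∈ K} := by
  refine card_nbij' (· + d) (· - d) ?_ ?_ ?_ ?_ <;> intro v hv <;> simp_all

lemma card_filter_sub_mem_add_missing (d : ℤ × ℤ) : #{v ∈ K | v - d ∈ K} + missing K d = #K :=
  card_filter_add_card_filter_not _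

lemma bondCount_eq_sum : bondCount K = ∑ d ∈ unitDirs, #{v ∈ K | v - d ∈ K} := by
  rw [bondCount, card_eq_sum_card_fiberwise fun e he => hexNorm_eq_one_iff.1 (mem_filter.1 he).2]
  refine sum_congr rfl fun d hd => ?_
  have hd0 : d ≠ 0 := by rintro rfl; simp [unitDirs, Prod.ext_iff] at hd
  rw [filter_filter, ← card_offDiag_filter_sub_eq K hd0]
  congr 1
  refine filter_congr fun e _ => ⟨And.right, fun h => ⟨?_, h⟩⟩
  rw [h]
  exact hexNorm_eq_one_iff.2 hd

lemma bondCount_add_two_mul_deficit : bondCount K + 2 * deficit K = 6 * #K := by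
  have h₁ := card_filter_sub_mem_add_missing K (1, 0)
  have h₂ := card_filter_sub_mem_add_missing K (0, 1)
  have h₃ := card_filter_sub_mem_add_missing K (-1, 1)
  have n₁ := card_filter_sub_neg_mem K (1, 0)
  have n₂ := card_filter_sub_neg_mem K (0, 1)
  have n₃ := card_filter_sub_neg_mem K (-1, 1)
  simp only [Prod.neg_mk, neg_neg, neg_zero] at n₁ n₂ n₃
  rw [bondCount_eq_sum, deficit, unitDirs, sum_insert (by decide), sum_insert (by decide),
    sum_insert (by decide), sum_insert (by decide), sum_insert (by decide), sum_singleton]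
  omega

variable {q : ℕ}

lemma card_bottom_le_missing (hK : ∀ v ∈ K, 0 ≤ v.2) {d : ℤ × ℤ} (hd : d.2 = 1) :
    #{v ∈ K | v.2 = 0} ≤ missing K d := by
  refine card_le_card (monotone_filter_right _ fun v hv h hmem => ?_)
  have := hK _ hmem
  simp only [Prod.snd_sub, hd] at this
  omega

lemma card_bottom_eq :
    #{v ∈ K | v.2 = 0} = substrateCount q K + #{v ∈ K | v.2 = 0 ∧ ¬(q : ℤ) ∣ v.1} := by
  rw [substrateCount, ← card_filter_add_card_filter_not (p := fun v : ℤ × ℤ => (q : ℤ) ∣ v.1),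
    filter_filter, filter_filter]
  exact congrArg (#· + _) (filter_congr fun _ _ => Iff.rfl)

lemma onSubstrate_union_subset (hq : 2 ≤ q) :
    {v ∈ K | OnSubstrate q v} ∪ {v ∈ K | v.2 ≠ 0 ∧ v - (1, 0) ∉ K} ⊆
      {v ∈ K | v - (1, 0) ∉ K} ∪ {v ∈ K | v.2 = 0 ∧ ¬(q : ℤ) ∣ v.1}.image (· + (1, 0)) := by
  intro v hv
  rw [mem_union, mem_filter, mem_filter, OnSubstrate] at hv
  by_cases hleft : v - (1, 0) ∈ K
  · rcases hv with ⟨-, hv0, hqv⟩ | ⟨-, -, h⟩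
    · refine mem_union_right _ (mem_image.2 ⟨v - (1, 0), mem_filter.2 ⟨hleft, by simpa, ?_⟩, by simp⟩)
      intro hq1
      have := Int.le_of_dvd one_pos (by simpa using dvd_sub hqv hq1)
      omega
    · exact absurd hleft h
  · exact mem_union_left _ (mem_filter.2 ⟨by rcases hv with h | h <;> exact h.1, hleft⟩)

lemma three_mul_substrateCount_add_le (hq : 2 ≤ q) (hK : ∀ v ∈ K, 0 ≤ v.2) :
    3 * substrateCount q K + #{v ∈ K | v.2 ≠ 0 ∧ v - (1, 0) ∉ K} +
      #{v ∈ K | v.2 = 0 ∧ ¬(q : ℤ) ∣ v.1} ≤ deficit K := by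
  have hdisj : Disjoint {v ∈ K | OnSubstrate q v} {v ∈ K | v.2 ≠ 0 ∧ v - (1, 0) ∉ K} :=
    disjoint_filter.2 fun v _ h1 h2 => h2.1 h1.1
  have h₁ := (card_union_of_disjoint hdisj).symm.trans_le <|
    (card_le_card (onSubstrate_union_subset K hq)).trans <|
      (card_union_le _ _).trans (Nat.add_le_add_left card_image_le _)
  have h₂ := card_bottom_le_missing K hK (d := (0, 1)) rfl
  have h₃ := card_bottom_le_missing K hK (d := (-1, 1)) rfl
  rw [card_bottom_eq (q := q), substrateCount] at h₂ h₃
  rw [deficit, missing, substrateCount]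
  omega

lemma exists_missing_left_of_mem {v : ℤ × ℤ} (hv : v ∈ K) :
    ∃ u ∈ K, u.2 = v.2 ∧ u - (1, 0) ∉ K := by
  obtain ⟨u, hu, hmin⟩ :=
    exists_min_image {w ∈ K | w.2 = v.2} Prod.fst ⟨v, mem_filter.2 ⟨hv, rfl⟩⟩
  rw [mem_filter] at hu
  refine ⟨u, hu.1, hu.2, fun h => ?_⟩
  have := hmin _ (mem_filter.2 ⟨h, by simpa using hu.2⟩)
  simp at this

lemma three_mul_substrateCount_lt (hq : 2 ≤ q) (hK : ∀ v ∈ K, 0 ≤ v.2)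
    (h : ∃ v ∈ K, ¬OnSubstrate q v) : 3 * substrateCount q K < deficit K := by
  have hle := three_mul_substrateCount_add_le K hq hK
  obtain ⟨v, hvK, hv⟩ := h
  by_cases hv0 : v.2 = 0
  · have : 0 < #{v ∈ K | v.2 = 0 ∧ ¬(q : ℤ) ∣ v.1} :=
      card_pos.2 ⟨v, mem_filter.2 ⟨hvK, hv0, fun h => hv ⟨hv0, h⟩⟩⟩
    omega
  · obtain ⟨u, huK, hu, hleft⟩ := exists_missing_left_of_mem K hvK
    have : 0 < #{v ∈ K | v.2 ≠ 0 ∧ v - (1, 0) ∉ K} :=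
      card_pos.2 ⟨u, mem_filter.2 ⟨huK, hu ▸ hv0, hleft⟩⟩
    omega

end Counting

section Energy

variable {cF cS : ℝ} {p q : ℕ}

lemma vF_dE_latticePt {u v : ℤ × ℤ} (huv : u ≠ v) :
    vF cF (dE (latticePt p q u) (latticePt p q v)) =
      if hexNorm (u - v) = 1 then ((-cF : ℝ) : EReal) else 0 := by
  have h1 : (1 : ℝ) ≤ hexNorm (u - v) := mod_cast one_le_hexNorm (sub_ne_zero.2 huv)
  rw [vF, dE_latticePt, if_neg (Real.one_le_sqrt.2 h1).not_gt]
  simp only [Real.sqrt_eq_one, Int.cast_eq_one]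

lemma Vn_image_latticePt (K : Finset (ℤ × ℤ)) :
    Vn cF cS p q (K.image (latticePt p q)) =
      ((-cF * bondCount K - cS * substrateCount q K : ℝ) : EReal) := by
  have hinj := latticePt_injective (p := p) (q := q)
  have hbonds : ∑ e ∈ (K.image (latticePt p q)).offDiag, vF cF (dE e.1 e.2) =
      ((bondCount K • -cF : ℝ) : EReal) := by
    rw [offDiag_image_of_injective hinj, sum_image fun a _ b _ h => (hinj.prodMap hinj) h]
    simp only [Prod.map_fst, Prod.map_snd]
    rw [sum_congr rfl fun e he => vF_dE_latticePt (mem_offDiag.1 he).2.2, ← sum_filter,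
      sum_const, EReal.coe_nsmul, bondCount]
  have hsubstrate : ∑ x ∈ K.image (latticePt p q), v1 cS p q x = substrateCount q K • -cS := by
    simp only [sum_image fun a _ b _ h => hinj h, v1, latticePt_mem_bLFS_iff, ← sum_filter,
      sum_const, substrateCount]
  rw [Vn, hbonds, hsubstrate, ← EReal.coe_add, nsmul_eq_mul, nsmul_eq_mul]
  ring_nf

lemma Vn_image_latticePt_eq (K : Finset (ℤ × ℤ)) :
    Vn cF cS p q (K.image (latticePt p q)) =
      ((-cS * #K + (cS - 6 * cF) * (#K - substrateCount q K) +
        2 * cF * (deficit K - 3 * substrateCount q K) : ℝ) : EReal) := by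
  have h : (bondCount K : ℝ) + 2 * deficit K = 6 * #K := mod_cast bondCount_add_two_mul_deficit K
  rw [Vn_image_latticePt]
  congr 1
  linear_combination (-cF) * h

lemma Vn_of_subset_bLFS (hq : 2 ≤ q) {D : Finset Pt} (hD : ↑D ⊆ bLFS p q) :
    Vn cF cS p q D = ((-cS * #D : ℝ) : EReal) := by
  obtain ⟨K, hK, rfl⟩ := exists_image_latticePt (hD.trans bLFS_subset_LF)
  have hm : substrateCount q K = #K :=
    congrArg card (filter_true_of_mem fun v hv =>
      latticePt_mem_bLFS_iff.1 (hD (mem_image_of_mem _ hv)))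
  have hle : deficit K ≤ 3 * #K := by
    have := fun d => card_filter_le K fun v => v - d ∉ K
    unfold deficit missing
    linarith [this (1, 0), this (0, 1), this (-1, 1)]
  have hge := (three_mul_substrateCount_add_le K hq hK).trans' (Nat.le_add_right _ _)
  have : (deficit K : ℝ) = 3 * substrateCount q K := by
    rw [hm] at hge ⊢
    exact_mod_cast le_antisymm hle (by omega)
  rw [Vn_image_latticePt_eq, card_image_of_injective _ latticePt_injective, this, hm]
  congr 1
  ring

lemma neg_mul_card_le_Vn (hq : 2 ≤ q) (hcF : 0 ≤ cF) (h : 6 * cF ≤ cS) {D : Finset Pt}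
    (hD : ↑D ⊆ LF p q) : ((-cS * #D : ℝ) : EReal) ≤ Vn cF cS p q D := by
  obtain ⟨K, hK, rfl⟩ := exists_image_latticePt hD
  have hm : (substrateCount q K : ℝ) ≤ #K := mod_cast card_filter_le _ _
  have hdef : 3 * (substrateCount q K : ℝ) ≤ deficit K :=
    mod_cast (three_mul_substrateCount_add_le K hq hK).trans' (by omega)
  rw [Vn_image_latticePt_eq, card_image_of_injective _ latticePt_injective, EReal.coe_le_coe_iff]
  nlinarith [mul_nonneg (sub_nonneg.2 h) (sub_nonneg.2 hm), mul_nonneg hcF (sub_nonneg.2 hdef)]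

lemma neg_mul_card_lt_Vn (hq : 2 ≤ q) (hcF : 0 < cF) (h : 6 * cF ≤ cS) {D : Finset Pt}
    (hD : ↑D ⊆ LF p q) (hx : ∃ x ∈ D, x ∉ bLFS p q) :
    ((-cS * #D : ℝ) : EReal) < Vn cF cS p q D := by
  obtain ⟨K, hK, rfl⟩ := exists_image_latticePt hD
  obtain ⟨v, hvK, hv⟩ : ∃ v ∈ K, ¬OnSubstrate q v := by
    obtain ⟨x, hx, hxb⟩ := hx
    obtain ⟨v, hvK, rfl⟩ := mem_image.1 hx
    exact ⟨v, hvK, mt latticePt_mem_bLFS_iff.2 hxb⟩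
  have hm : (substrateCount q K : ℝ) ≤ #K := mod_cast card_filter_le _ _
  have hdef : 3 * (substrateCount q K : ℝ) + 1 ≤ deficit K :=
    mod_cast three_mul_substrateCount_lt K hq hK ⟨v, hvK, hv⟩
  rw [Vn_image_latticePt_eq, card_image_of_injective _ latticePt_injective, EReal.coe_lt_coe_iff]
  nlinarith [mul_nonneg (sub_nonneg.2 h) (sub_nonneg.2 hm), mul_le_mul_of_nonneg_left hdef hcF.le]

lemma exists_subset_bLFS_card_eq (hq : q ≠ 0) (n : ℕ) :
    ∃ Dw : Finset Pt, ↑Dw ⊆ bLFS p q ∧ #Dw = n := by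
  have hinj : Function.Injective fun i : ℕ => latticePt p q (i * q, 0) := by
    intro i j h
    have := congrArg Prod.fst (latticePt_injective h)
    simp only at this
    exact_mod_cast mul_right_cancel₀ (by exact_mod_cast hq) this
  refine ⟨(range n).image fun i : ℕ => latticePt p q (i * q, 0), ?_, ?_⟩
  · intro x hx
    obtain ⟨i, -, rfl⟩ := mem_image.1 hx
    exact latticePt_mem_bLFS_iff.2 ⟨rfl, dvd_mul_left _ _⟩
  · rw [card_image_of_injective _ hinj, card_range]

end Energy

def box (k : ℕ) : Finset (ℤ × ℤ) := Icc (1 : ℤ) k ×ˢ Icc (1 : ℤ) k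

section Box

variable {cF cS : ℝ} {p q : ℕ}

lemma card_box (k : ℕ) : #(box k) = k * k := by
  simp [box]

lemma missing_box_le (k : ℕ) {d : ℤ × ℤ} (h₁ : -1 ≤ d.1) (h₁' : d.1 ≤ 1) (h₂ : 0 ≤ d.2)
    (h₂' : d.2 ≤ 1) : missing (box k) d ≤ 3 * k := by
  have hsub : {v ∈ box k | v - d ∉ box k} ⊆
      ({1, (k : ℤ)} ×ˢ Icc (1 : ℤ) k) ∪ (Icc (1 : ℤ) k ×ˢ {1}) := by
    intro v hv
    simp only [mem_filter, box, mem_product, mem_Icc, Prod.fst_sub, Prod.snd_sub, mem_union,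
      mem_insert, mem_singleton] at hv ⊢
    omega
  have hpair : #({1, (k : ℤ)} : Finset ℤ) ≤ 2 := card_le_two
  refine (card_le_card hsub).trans <| (card_union_le _ _).trans ?_
  simp only [card_product, Int.card_Icc, add_sub_cancel_right, Int.toNat_natCast, card_singleton]
  nlinarith

lemma deficit_box_le (k : ℕ) : deficit (box k) ≤ 9 * k := by
  have h₁ := missing_box_le k (d := (1, 0)) (by norm_num) le_rfl le_rfl zero_le_one
  have h₂ := missing_box_le k (d := (0, 1)) (by norm_num) zero_le_one zero_le_one le_rfl
  have h₃ := missing_box_le k (d := (-1, 1)) le_rfl (by norm_num) zero_le_one le_rfl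
  unfold deficit
  omega

lemma substrateCount_box (k : ℕ) : substrateCount q (box k) = 0 := by
  refine card_eq_zero.2 (filter_eq_empty_iff.2 fun v hv h => ?_)
  simp only [box, mem_product, mem_Icc] at hv
  have := h.1
  omega

lemma exists_Vn_lt_neg_mul_card (hcF : 0 < cF) (h : cS < 6 * cF) :
    ∃ D : Finset Pt, ↑D ⊆ LF p q ∧ (∃ x ∈ D, x ∉ bLFS p q) ∧
      Vn cF cS p q D < ((-cS * #D : ℝ) : EReal) := by
  obtain ⟨k, hk⟩ := exists_nat_gt (18 * cF / (6 * cF - cS))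
  have hgap : 18 * cF < (6 * cF - cS) * k := (div_lt_iff₀' (by linarith)).1 hk
  have hk0 : (0 : ℝ) < k := pos_of_mul_pos_right (hgap.trans' (by positivity)) (by linarith)
  have h11 : ((1, 1) : ℤ × ℤ) ∈ box k := by
    have hk1 : (1 : ℤ) ≤ k := by have := Nat.cast_pos.1 hk0; omega
    simp only [box, mem_product, mem_Icc]
    exact ⟨⟨le_rfl, hk1⟩, le_rfl, hk1⟩
  refine ⟨(box k).image (latticePt p q), ?_, ⟨_, mem_image_of_mem _ h11, ?_⟩, ?_⟩
  · intro x hx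
    obtain ⟨v, hv, rfl⟩ := mem_image.1 hx
    simp only [box, mem_product, mem_Icc] at hv
    exact mem_LF_iff.2 ⟨v, by omega, rfl⟩
  · exact fun hb => absurd (latticePt_mem_bLFS_iff.1 hb).1 one_ne_zero
  · have hdef : (deficit (box k) : ℝ) ≤ 9 * k := mod_cast deficit_box_le k
    rw [Vn_image_latticePt_eq, card_image_of_injective _ latticePt_injective, card_box,
      substrateCount_box, EReal.coe_lt_coe_iff]
    push_cast
    nlinarith [mul_lt_mul_of_pos_right hgap hk0]

end Box

end FilmLattice

open FilmLattice

theorem wetting_regime_q_ne_one_general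
    (cF cS : ℝ) (hcF : 0 < cF)
    (p q : ℕ) (hq : 0 < q) (hq1 : q ≠ 1) :
    6 * cF ≤ cS ↔
      ∀ n : ℕ, ∀ Dw : Finset Pt, ↑Dw ⊆ bLFS p q → Dw.card = n →
        ((∀ D ∈ Cn p q n, Vn cF cS p q Dw ≤ Vn cF cS p q D) ∧
          (∀ D ∈ Cn p q n, (∃ x ∈ D, x ∉ bLFS p q) →
            Vn cF cS p q Dw < Vn cF cS p q D)) := by
  have hq2 : 2 ≤ q := by omega
  constructor
  · rintro h n Dw hDw rfl
    rw [Vn_of_subset_bLFS hq2 hDw]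
    exact ⟨fun D ⟨hD, hcard⟩ => hcard ▸ neg_mul_card_le_Vn hq2 hcF.le h hD,
      fun D ⟨hD, hcard⟩ hx => hcard ▸ neg_mul_card_lt_Vn hq2 hcF h hD hx⟩
  · intro H
    by_contra! h
    obtain ⟨D, hD, hx, hlt⟩ := exists_Vn_lt_neg_mul_card (p := p) (q := q) hcF h
    obtain ⟨Dw, hDw, hcard⟩ := exists_subset_bLFS_card_eq (p := p) hq.ne' D.card
    have hwet := (H _ Dw hDw hcard).2 D ⟨hD, rfl⟩ hx
    rw [Vn_of_subset_bLFS hq2 hDw, hcard] at hwet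
    exact lt_asymm hwet hlt

/-- for `q ≠ 1`, wetting configurations are the (strict, among
configurations leaving `∂L_{FS}`) minimizers for every `n` iff `c_S ≥ 6 c_F`. -/
theorem wetting_regime_q_ne_one
    (cF cS : ℝ) (hcF : 0 < cF) (hcS : 0 < cS)
    (p q : ℕ) (hp : 0 < p) (hq : 0 < q) (hpq : Nat.Coprime p q) (hq1 : q ≠ 1) :
    6 * cF ≤ cS ↔
      ∀ n : ℕ, ∀ Dw : Finset Pt, ↑Dw ⊆ bLFS p q → Dw.card = n →
        ((∀ D ∈ Cn p q n, Vn cF cS p q Dw ≤ Vn cF cS p q D) ∧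
          (∀ D ∈ Cn p q n, (∃ x ∈ D, x ∉ bLFS p q) →
            Vn cF cS p q Dw < Vn cF cS p q D)) :=
  wetting_regime_q_ne_one_general cF cS hcF p q hq hq1
end
end

section
/- Assume q ≠ 1. If there exists a strictly increasing sequence (n_k) of positive integers such that for every k the wetting configurations with n_k atoms are minimizers, i.e. every D^w_{n_k} ⊂ ∂L_{FS} with #D^w_{n_k} = n_k satisfies V_{n_k}(D^w_{n_k}) = min{V_{n_k}(D) : D ∈ C_{n_k}}, then c_S ≥ 6 c_F. -/
open scoped BigOperators Classical Topology ENNReal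
open Filter MeasureTheory

noncomputable section

namespace WettingAux

/-- The index-to-point map of the triangular lattice. -/
def Fpt (p q : ℕ) (u : ℕ × ℕ) : Pt :=
  ((u.1 : ℝ) + (u.2 : ℝ) / 2, eS p q + (u.2 : ℝ) * (Real.sqrt 3 / 2))

lemma Fpt_mem_LF (p q : ℕ) (u : ℕ × ℕ) : Fpt p q u ∈ LF p q := by
  refine ⟨(u.1 : ℤ), u.2, ?_⟩
  simp only [Fpt, t1, t2, Prod.smul_mk, smul_eq_mul, Prod.mk_add_mk, Prod.mk.injEq]
  constructor <;> push_cast <;> ring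

lemma Fpt_inj (p q : ℕ) : Function.Injective (Fpt p q) := by
  intro u v h
  have h1 := congrArg Prod.fst h
  have h2 := congrArg Prod.snd h
  simp only [Fpt] at h1 h2
  have h3 : (0:ℝ) < Real.sqrt 3 := Real.sqrt_pos.mpr (by norm_num)
  have hv2 : (u.2 : ℝ) = v.2 := by
    have := mul_right_cancel₀ (by positivity : (Real.sqrt 3 / 2) ≠ 0) (by linarith : (u.2:ℝ) * (Real.sqrt 3/2) = (v.2:ℝ) * (Real.sqrt 3/2))
    exact this
  have hv1 : (u.1 : ℝ) = v.1 := by linarith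
  have : u.1 = v.1 := Nat.cast_injective hv1
  have : u.2 = v.2 := Nat.cast_injective hv2
  exact Prod.ext ‹u.1 = v.1› ‹u.2 = v.2›

lemma dE_Fpt (p q : ℕ) (u v : ℕ × ℕ) :
    dE (Fpt p q u) (Fpt p q v) =
      Real.sqrt (((((u.1:ℤ) - v.1)^2 + ((u.1:ℤ) - v.1)*((u.2:ℤ) - v.2) + ((u.2:ℤ) - v.2)^2 : ℤ) : ℝ)) := by
  have h3 : Real.sqrt 3 ^ 2 = 3 := Real.sq_sqrt (by norm_num)
  unfold dE Fpt
  congr 1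
  push_cast
  linear_combination (((u.2:ℝ) - v.2)^2 / 4) * h3

lemma quad_pos {A B : ℤ} (h : ¬(A = 0 ∧ B = 0)) : 1 ≤ A^2 + A*B + B^2 := by
  by_contra hlt
  push_neg at hlt
  have hb : B = 0 := by nlinarith [sq_nonneg (2*A+B), sq_nonneg B]
  have ha : A = 0 := by nlinarith
  exact h ⟨ha, hb⟩

lemma one_le_dE_Fpt (p q : ℕ) {u v : ℕ × ℕ} (h : u ≠ v) :
    1 ≤ dE (Fpt p q u) (Fpt p q v) := by
  rw [dE_Fpt]
  have hne : ¬(((u.1:ℤ) - v.1) = 0 ∧ ((u.2:ℤ) - v.2) = 0) := by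
    rintro ⟨h1, h2⟩
    exact h (Prod.ext (by omega) (by omega))
  have h1 : (1:ℤ) ≤ ((u.1:ℤ) - v.1)^2 + ((u.1:ℤ) - v.1)*((u.2:ℤ) - v.2) + ((u.2:ℤ) - v.2)^2 :=
    quad_pos hne
  have h2 : (1:ℝ) ≤ ((((u.1:ℤ) - v.1)^2 + ((u.1:ℤ) - v.1)*((u.2:ℤ) - v.2) + ((u.2:ℤ) - v.2)^2 : ℤ) : ℝ) := by
    exact_mod_cast h1
  calc (1:ℝ) = Real.sqrt 1 := Real.sqrt_one.symm
    _ ≤ _ := Real.sqrt_le_sqrt h2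

lemma dE_Fpt_eq_one (p q : ℕ) {u v : ℕ × ℕ}
    (h : ((u.1:ℤ) - v.1)^2 + ((u.1:ℤ) - v.1)*((u.2:ℤ) - v.2) + ((u.2:ℤ) - v.2)^2 = 1) :
    dE (Fpt p q u) (Fpt p q v) = 1 := by
  rw [dE_Fpt, h]
  norm_num

lemma vF_of_one_le (cF r : ℝ) (h : 1 ≤ r) :
    vF cF r = (((if r = 1 then -cF else 0 : ℝ)) : EReal) := by
  unfold vF
  rcases eq_or_lt_of_le h with h1 | h1
  · rw [if_neg (by linarith), if_pos h1.symm, if_pos h1.symm]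
  · rw [if_neg (by linarith), if_neg (by linarith : ¬ r = 1), if_neg (by linarith : ¬ r = 1)]
    simp

end WettingAux
namespace WettingAux

lemma coe_sum {α : Type*} (s : Finset α) (f : α → ℝ) :
    ((∑ i ∈ s, f i : ℝ) : EReal) = ∑ i ∈ s, ((f i : ℝ) : EReal) :=
  map_sum (⟨⟨Real.toEReal, EReal.coe_zero⟩, fun x y => EReal.coe_add x y⟩ : ℝ →+ EReal) f s

def Dwet (p q n : ℕ) : Finset Pt := (Finset.range n).image (fun i : ℕ => (((i : ℝ) * (q : ℝ), eS p q) : Pt))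

lemma Dwet_subset (p q n : ℕ) : ↑(Dwet p q n) ⊆ bLFS p q := by
  intro x hx
  simp only [Dwet, Finset.coe_image, Set.mem_image, Finset.mem_coe, Finset.mem_range] at hx
  obtain ⟨i, _, rfl⟩ := hx
  exact ⟨(i : ℤ), by push_cast; rfl⟩

lemma Dwet_card (p q n : ℕ) (hq : 0 < q) : (Dwet p q n).card = n := by
  rw [Dwet, Finset.card_image_of_injective, Finset.card_range]
  intro i j h
  have h1 : (i : ℝ) * q = (j : ℝ) * q := congrArg Prod.fst h
  have hq' : (q : ℝ) ≠ 0 := by positivity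
  have : (i : ℝ) = j := mul_right_cancel₀ hq' h1
  exact_mod_cast this

lemma Vn_Dwet (cF cS : ℝ) (p q n : ℕ) (hq2 : 2 ≤ q) :
    Vn cF cS p q (Dwet p q n) = ((-cS * n : ℝ) : EReal) := by
  have hsub := Dwet_subset p q n
  have hcard := Dwet_card p q n (by omega)
  unfold Vn
  have h0 : (∑ e ∈ (Dwet p q n).offDiag, vF cF (dE e.1 e.2)) = 0 := by
    apply Finset.sum_eq_zero
    intro e he
    rw [Finset.mem_offDiag] at he
    obtain ⟨h1, h2, hne⟩ := he
    simp only [Dwet, Finset.mem_image, Finset.mem_range] at h1 h2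
    obtain ⟨i, _, hi⟩ := h1
    obtain ⟨j, _, hj⟩ := h2
    have hij : i ≠ j := by
      rintro rfl
      exact hne (hi.symm.trans hj)
    have hd : dE e.1 e.2 = |(i:ℝ) * q - (j:ℝ) * q| := by
      rw [← hi, ← hj]
      unfold dE
      simp only [sub_self]
      rw [show ((i:ℝ) * q - (j:ℝ) * q) ^ 2 + 0 ^ 2 = ((i:ℝ) * q - (j:ℝ) * q) ^ 2 by ring]
      exact Real.sqrt_sq_eq_abs _
    have h2q : (2:ℝ) ≤ |(i:ℝ) * q - (j:ℝ) * q| := by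
      rw [show (i:ℝ) * q - (j:ℝ) * q = ((i:ℝ) - (j:ℝ)) * q by ring, abs_mul]
      have hz : ((i:ℤ) - j) ≠ 0 := by omega
      have h1 : (1:ℝ) ≤ |(i:ℝ) - (j:ℝ)| := by exact_mod_cast Int.one_le_abs hz
      have h2 : (2:ℝ) ≤ |(q:ℝ)| := by
        rw [abs_of_nonneg (by positivity)]; exact_mod_cast hq2
      nlinarith [abs_nonneg ((i:ℝ) - (j:ℝ))]
    rw [hd]
    unfold vF
    rw [if_neg (by linarith), if_neg (by linarith)]
  rw [h0, zero_add]
  congr 1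
  have : ∀ x ∈ Dwet p q n, v1 cS p q x = -cS := by
    intro x hx
    rw [v1, if_pos (hsub hx)]
  rw [Finset.sum_congr rfl this, Finset.sum_const, hcard, nsmul_eq_mul]
  ring

end WettingAux
namespace WettingAux

lemma good_config (cF cS : ℝ) (hcF : 0 < cF) (hcS : 0 < cS) (p q n : ℕ) (h100 : 100 ≤ n) :
    ∃ D ∈ Cn p q n,
      Vn cF cS p q D ≤
        (((-(6*cF)) * (((Nat.sqrt n - 2) * (n / Nat.sqrt n - 2) : ℕ) : ℝ) : ℝ) : EReal) := by
  set m := Nat.sqrt n with hmdef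
  set R := n / m with hRdef
  set s := n % m with hsdef
  have hm10 : 10 ≤ m := by
    have h1 := Nat.sqrt_le_sqrt h100
    have h2 : Nat.sqrt 100 = 10 := by norm_num
    omega
  have hm0 : 0 < m := by omega
  have hmm : m * m ≤ n := by nlinarith [Nat.sqrt_le' n]
  have hs : s < m := Nat.mod_lt _ hm0
  have hn : m * R + s = n := Nat.div_add_mod n m
  have hRm : m ≤ R := (Nat.le_div_iff_mul_le hm0).mpr hmm
  set S : Finset (ℕ × ℕ) := (Finset.range m ×ˢ Finset.range R) ∪ (Finset.range s ×ˢ {R})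
    with hSdef
  set I : Finset (ℕ × ℕ) := Finset.Icc 1 (m-2) ×ˢ Finset.Icc 1 (R-2) with hIdef
  have hIS : I ⊆ S := by
    intro u hu
    simp only [hIdef, Finset.mem_product, Finset.mem_Icc] at hu
    apply Finset.mem_union_left
    simp only [Finset.mem_product, Finset.mem_range]
    omega
  have hdisj : Disjoint (Finset.range m ×ˢ Finset.range R) (Finset.range s ×ˢ ({R} : Finset ℕ)) := by
    rw [Finset.disjoint_left]
    intro u hu hu'
    simp only [Finset.mem_product, Finset.mem_range, Finset.mem_singleton] at hu hu'
    omega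
  have hScard : S.card = n := by
    rw [hSdef, Finset.card_union_of_disjoint hdisj]
    simp only [Finset.card_product, Finset.card_range, Finset.card_singleton]
    omega
  set D : Finset Pt := S.image (Fpt p q) with hDdef
  have hDcard : D.card = n := by
    rw [hDdef, Finset.card_image_of_injective _ (Fpt_inj p q), hScard]
  have hDCn : D ∈ Cn p q n := by
    refine ⟨?_, hDcard⟩
    intro x hx
    simp only [hDdef, Finset.coe_image, Set.mem_image, Finset.mem_coe] at hx
    obtain ⟨u, _, rfl⟩ := hx
    exact Fpt_mem_LF p q u
  refine ⟨D, hDCn, ?_⟩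
  have hIcard : I.card = (m - 2) * (R - 2) := by
    simp only [hIdef, Finset.card_product, Nat.card_Icc]
    congr 1 <;> omega
  -- rewrite the pair interaction sum as a real sum
  have step1 : (∑ e ∈ D.offDiag, vF cF (dE e.1 e.2))
      = ((∑ e ∈ D.offDiag, (if dE e.1 e.2 = 1 then -cF else 0) : ℝ) : EReal) := by
    rw [coe_sum]
    apply Finset.sum_congr rfl
    intro e he
    rw [Finset.mem_offDiag] at he
    obtain ⟨h1, h2, hne⟩ := he
    obtain ⟨u, hu, hue⟩ := Finset.mem_image.mp h1
    obtain ⟨v, hv, hve⟩ := Finset.mem_image.mp h2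
    rw [← hue, ← hve] at hne ⊢
    exact vF_of_one_le cF _ (one_le_dE_Fpt p q (fun h => hne (by rw [h])))
  have step2 : (∑ e ∈ D.offDiag, (if dE e.1 e.2 = 1 then (-cF) else 0))
      = ∑ x ∈ D, ∑ y ∈ D, (if dE x y = 1 then (-cF) else 0) := by
    rw [← Finset.sum_product']
    apply Finset.sum_subset
    · intro e he
      rw [Finset.mem_offDiag] at he
      exact Finset.mem_product.mpr ⟨he.1, he.2.1⟩
    · intro e he hne
      rw [Finset.mem_product] at he
      have : e.1 = e.2 := by
        by_contra hc
        exact hne (Finset.mem_offDiag.mpr ⟨he.1, he.2, hc⟩)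
      rw [this]
      have : dE e.2 e.2 = 0 := by simp [dE]
      rw [if_neg (by rw [this]; norm_num)]
  have step3 : (∑ x ∈ D, ∑ y ∈ D, (if dE x y = 1 then (-cF) else 0))
      = ∑ u ∈ S, ∑ v ∈ S, (if dE (Fpt p q u) (Fpt p q v) = 1 then (-cF) else 0) := by
    rw [hDdef, Finset.sum_image (fun a _ b _ h => Fpt_inj p q h)]
    apply Finset.sum_congr rfl
    intro u _
    rw [Finset.sum_image (fun a _ b _ h => Fpt_inj p q h)]
  have step4 : (∑ u ∈ S, ∑ v ∈ S, (if dE (Fpt p q u) (Fpt p q v) = 1 then (-cF) else 0))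
      ≤ ∑ u ∈ S, (if u ∈ I then -(6*cF) else 0) := by
    apply Finset.sum_le_sum
    intro u hu
    by_cases hI : u ∈ I
    · rw [if_pos hI]
      obtain ⟨i, j⟩ := u
      simp only [hIdef, Finset.mem_product, Finset.mem_Icc] at hI
      obtain ⟨⟨hi1, hi2⟩, hj1, hj2⟩ := hI
      set N : Finset (ℕ × ℕ) :=
        {(i+1,j), (i-1,j), (i,j+1), (i,j-1), (i+1,j-1), (i-1,j+1)} with hNdef
      have hNS : N ⊆ S := by
        intro v hv
        apply Finset.mem_union_left
        simp only [hNdef, Finset.mem_insert, Finset.mem_singleton] at hv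
        simp only [Finset.mem_product, Finset.mem_range]
        rcases hv with rfl|rfl|rfl|rfl|rfl|rfl <;> constructor <;> omega
      have hNcard : N.card = 6 := by
        rw [hNdef]
        rw [Finset.card_insert_of_notMem (by simp only [Finset.mem_insert, Finset.mem_singleton, Prod.mk.injEq]; omega),
            Finset.card_insert_of_notMem (by simp only [Finset.mem_insert, Finset.mem_singleton, Prod.mk.injEq]; omega),
            Finset.card_insert_of_notMem (by simp only [Finset.mem_insert, Finset.mem_singleton, Prod.mk.injEq]; omega),
            Finset.card_insert_of_notMem (by simp only [Finset.mem_insert, Finset.mem_singleton, Prod.mk.injEq]; omega),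
            Finset.card_insert_of_notMem (by simp only [Finset.mem_insert, Finset.mem_singleton, Prod.mk.injEq]; omega),
            Finset.card_singleton]
      have hNd : ∀ v ∈ N, dE (Fpt p q (i,j)) (Fpt p q v) = 1 := by
        intro v hv
        simp only [hNdef, Finset.mem_insert, Finset.mem_singleton] at hv
        have e1 : ((i - 1 : ℕ) : ℤ) = (i : ℤ) - 1 := by omega
        have e2 : ((j - 1 : ℕ) : ℤ) = (j : ℤ) - 1 := by omega
        rcases hv with rfl|rfl|rfl|rfl|rfl|rfl <;>
          · apply dE_Fpt_eq_one
            push_cast [e1, e2]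
            ring
      calc (∑ v ∈ S, (if dE (Fpt p q (i,j)) (Fpt p q v) = 1 then (-cF) else 0))
          = (∑ v ∈ S \ N, (if dE (Fpt p q (i,j)) (Fpt p q v) = 1 then (-cF) else 0))
            + ∑ v ∈ N, (if dE (Fpt p q (i,j)) (Fpt p q v) = 1 then (-cF) else 0) :=
            (Finset.sum_sdiff hNS).symm
        _ ≤ 0 + ∑ v ∈ N, (-cF) := by
            apply add_le_add
            · apply Finset.sum_nonpos
              intro v _
              split_ifs <;> linarith
            · apply le_of_eq
              exact Finset.sum_congr rfl (fun v hv => if_pos (hNd v hv))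
        _ = -(6*cF) := by
            rw [Finset.sum_const, hNcard, nsmul_eq_mul]
            push_cast; ring
    · rw [if_neg hI]
      apply Finset.sum_nonpos
      intro v _
      split_ifs <;> linarith
  have step5 : (∑ u ∈ S, (if u ∈ I then -(6*cF) else 0))
      = -(6*cF) * (((m - 2) * (R - 2) : ℕ) : ℝ) := by
    rw [Finset.sum_ite_mem, Finset.inter_eq_right.mpr hIS, Finset.sum_const, hIcard,
      nsmul_eq_mul]
    push_cast; ring
  have step6 : (∑ x ∈ D, v1 cS p q x) ≤ 0 := by
    apply Finset.sum_nonpos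
    intro x _
    unfold v1
    split_ifs <;> linarith
  unfold Vn
  rw [step1]
  rw [← EReal.coe_add]
  apply EReal.coe_le_coe_iff.mpr
  rw [step2, step3]
  have := step4
  rw [step5] at this
  linarith

end WettingAux
namespace WettingAux

lemma endgame (cF cS : ℝ) (hcF : 0 < cF) (hcon : cS < 6 * cF)
    (n m R s : ℕ) (hm10 : 10 ≤ m)
    (hmm : m * m ≤ n) (hs : s < m) (hn : m * R + s = n) (hR : R ≤ m + 2)
    (hreal : -cS * (n:ℝ) ≤ -(6*cF) * (((m - 2) * (R - 2) : ℕ) : ℝ)) :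
    (n : ℝ) ≤ (30 * cF / (6*cF - cS))^2 := by
  set δ := 6*cF - cS with hδdef
  have hδ : 0 < δ := by linarith
  have hcast : (((m - 2) * (R - 2) : ℕ) : ℝ) = ((m:ℝ) - 2) * ((R:ℝ) - 2) := by
    have hm2 : 2 ≤ m := by omega
    have hR2 : 2 ≤ R := by
      rcases Nat.lt_or_ge R 2 with h | h
      · exfalso; nlinarith
      · exact h
    push_cast [Nat.cast_sub hm2, Nat.cast_sub hR2]
    ring
  rw [hcast] at hreal
  have hA : (m:ℝ) * (R:ℝ) + (s:ℝ) = (n:ℝ) := by exact_mod_cast hn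
  have hB : (s:ℝ) < (m:ℝ) := by exact_mod_cast hs
  have hC : (R:ℝ) ≤ (m:ℝ) + 2 := by exact_mod_cast hR
  have hm10' : (10:ℝ) ≤ (m:ℝ) := by exact_mod_cast hm10
  have hδn : δ * (n:ℝ) ≤ 30 * cF * (m:ℝ) := by nlinarith
  set σ := Real.sqrt (n:ℝ) with hσdef
  have hσsq : σ * σ = (n:ℝ) := Real.mul_self_sqrt (by positivity)
  have hmσ : (m:ℝ) ≤ σ := by
    have h1 : ((m:ℝ)) * m ≤ (n:ℝ) := by exact_mod_cast hmm
    nlinarith [Real.sqrt_nonneg (n:ℝ)]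
  have hσpos : 0 < σ := by linarith
  have hδσ : δ * σ ≤ 30 * cF := by
    have h1 : δ * σ * σ ≤ 30 * cF * σ := by nlinarith
    exact le_of_mul_le_mul_right h1 hσpos
  have hσle : σ ≤ 30 * cF / δ := by
    rw [le_div_iff₀ hδ]; nlinarith
  calc (n:ℝ) = σ * σ := hσsq.symm
    _ ≤ (30 * cF / δ) * (30 * cF / δ) := by nlinarith
    _ = (30 * cF / δ)^2 := by ring

end WettingAux

/-- for `q ≠ 1`, if along a strictly increasing sequence of numbers
of atoms every wetting configuration is a minimizer, then `c_S ≥ 6 c_F`. -/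
theorem wetting_necessity_q_ne_one
    (cF cS : ℝ) (hcF : 0 < cF) (hcS : 0 < cS)
    (p q : ℕ) (hp : 0 < p) (hq : 0 < q) (hpq : Nat.Coprime p q) (hq1 : q ≠ 1)
    (nk : ℕ → ℕ) (hmono : StrictMono nk) (hpos : ∀ k, 0 < nk k)
    (hmin : ∀ k, ∀ Dw : Finset Pt, ↑Dw ⊆ bLFS p q → Dw.card = nk k →
      ∀ D ∈ Cn p q (nk k), Vn cF cS p q Dw ≤ Vn cF cS p q D) :
    6 * cF ≤ cS := by
  by_contra hcon
  push_neg at hcon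
  have hq2 : 2 ≤ q := by omega
  set K := max 100 (⌈(30*cF/(6*cF - cS))^2⌉₊ + 1) with hKdef
  set n := nk K with hndef
  have hKn : K ≤ n := hmono.le_apply
  have h100 : 100 ≤ n := le_trans (le_max_left _ _) hKn
  obtain ⟨D, hD, hVD⟩ := WettingAux.good_config cF cS hcF hcS p q n h100
  have hchain : Vn cF cS p q (WettingAux.Dwet p q n) ≤ Vn cF cS p q D :=
    hmin K (WettingAux.Dwet p q n) (WettingAux.Dwet_subset p q n)
      (WettingAux.Dwet_card p q n (by omega)) D hD
  rw [WettingAux.Vn_Dwet cF cS p q n hq2] at hchain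
  set m := Nat.sqrt n with hmdef
  set R := n / m with hRdef
  set s := n % m with hsdef
  have hreal : -cS * (n:ℝ) ≤ -(6*cF) * (((m - 2) * (R - 2) : ℕ) : ℝ) :=
    EReal.coe_le_coe_iff.mp (le_trans hchain hVD)
  have hm10 : 10 ≤ m := by
    have h1 := Nat.sqrt_le_sqrt h100
    have h2 : Nat.sqrt 100 = 10 := by norm_num
    omega
  have hm0 : 0 < m := by omega
  have hmm : m * m ≤ n := by nlinarith [Nat.sqrt_le' n]
  have hlt : n < (m+1) * (m+1) := by nlinarith [Nat.lt_succ_sqrt' n]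
  have hs : s < m := Nat.mod_lt _ hm0
  have hn : m * R + s = n := Nat.div_add_mod n m
  have hR : R ≤ m + 2 := by
    by_contra hc
    push_neg at hc
    have h1 : R * m ≤ n := Nat.div_mul_le_self n m
    nlinarith
  have hnle : (n:ℝ) ≤ (30 * cF / (6*cF - cS))^2 :=
    WettingAux.endgame cF cS hcF hcon n m R s hm10 hmm hs hn hR hreal
  have hKceil : (⌈(30*cF/(6*cF - cS))^2⌉₊ + 1 : ℕ) ≤ K := le_max_right _ _
  have h1 : ((⌈(30*cF/(6*cF - cS))^2⌉₊ : ℝ) + 1) ≤ (K:ℝ) := by exact_mod_cast hKceil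
  have h2 : (30*cF/(6*cF - cS))^2 ≤ (⌈(30*cF/(6*cF - cS))^2⌉₊ : ℝ) := Nat.le_ceil _
  have h3 : (K:ℝ) ≤ (n:ℝ) := by exact_mod_cast hKn
  linarith
end
end

section
/- Assume q = 1. If there exists a strictly increasing sequence (n_k) of positive integers such that for every k the consecutive wetting configuration with n_k atoms, D^w_{n_k} = {w, w + t₁, …, w + (n_k−1)t₁} ⊂ ∂L_{FS}, satisfies V_{n_k}(D^w_{n_k}) = min{V_{n_k}(D) : D ∈ C_{n_k}}, then c_S ≥ 4 c_F. -/
open scoped BigOperators Classical Topology ENNReal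
open Filter MeasureTheory

noncomputable section

/-! ### Auxiliary material for the proof -/

section Aux

/-- coercion of a finite real sum into `EReal` -/
lemma my_ereal_coe_sum {α : Type*} (s : Finset α) (f : α → ℝ) :
    ((∑ x ∈ s, f x : ℝ) : EReal) = ∑ x ∈ s, ((f x : ℝ) : EReal) := by
  induction s using Finset.cons_induction with
  | empty => simp
  | cons a s ha ih => rw [Finset.sum_cons, Finset.sum_cons, EReal.coe_add, ih]

lemma my_sum_if_count (s t : Finset ℕ) (P : ℕ → ℕ → Prop) (c : ℝ) :
    (∑ i ∈ s, ∑ j ∈ t, if P i j then c else 0)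
      = (((s ×ˢ t).filter fun p => P p.1 p.2).card : ℝ) * c := by
  rw [← Finset.sum_product']
  rw [Finset.sum_ite, Finset.sum_const, Finset.sum_const_zero, add_zero, nsmul_eq_mul]

lemma my_count_adj (a : ℕ) :
    (((Finset.range a) ×ˢ (Finset.range a)).filter
      fun p : ℕ × ℕ => p.1 = p.2 + 1 ∨ p.2 = p.1 + 1).card = 2 * (a - 1) := by
  have h1 : ((Finset.range a) ×ˢ (Finset.range a)).filter
      (fun p : ℕ × ℕ => p.1 = p.2 + 1 ∨ p.2 = p.1 + 1)
      = ((Finset.range (a-1)).image fun i => (i+1, i)) ∪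
        ((Finset.range (a-1)).image fun i => (i, i+1)) := by
    ext ⟨x, y⟩
    simp only [Finset.mem_filter, Finset.mem_product, Finset.mem_range, Finset.mem_union,
      Finset.mem_image, Prod.mk.injEq]
    constructor
    · rintro ⟨⟨hx, hy⟩, (h | h)⟩
      · exact Or.inl ⟨y, by omega, by omega, rfl⟩
      · exact Or.inr ⟨x, by omega, rfl, by omega⟩
    · rintro (⟨i, hi, h1, h2⟩ | ⟨i, hi, h1, h2⟩) <;> omega
  rw [h1, Finset.card_union_of_disjoint, Finset.card_image_of_injective,
    Finset.card_image_of_injective, Finset.card_range]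
  · omega
  · intro i j h; simp only [Prod.mk.injEq] at h; omega
  · intro i j h; simp only [Prod.mk.injEq] at h; omega
  · rw [Finset.disjoint_left]
    rintro ⟨x, y⟩ hx hy
    simp only [Finset.mem_image, Finset.mem_range, Prod.mk.injEq] at hx hy
    omega

lemma my_count_cross (a k : ℕ) (hk : k < a) :
    (((Finset.range a) ×ˢ (Finset.range k)).filter
      fun p : ℕ × ℕ => p.1 = p.2 ∨ p.1 = p.2 + 1).card = 2 * k := by
  have h1 : ((Finset.range a) ×ˢ (Finset.range k)).filter
      (fun p : ℕ × ℕ => p.1 = p.2 ∨ p.1 = p.2 + 1)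
      = ((Finset.range k).image fun i => (i, i)) ∪
        ((Finset.range k).image fun i => (i+1, i)) := by
    ext ⟨x, y⟩
    simp only [Finset.mem_filter, Finset.mem_product, Finset.mem_range, Finset.mem_union,
      Finset.mem_image, Prod.mk.injEq]
    constructor
    · rintro ⟨⟨hx, hy⟩, (h | h)⟩
      · exact Or.inl ⟨y, by omega, by omega, rfl⟩
      · exact Or.inr ⟨y, by omega, by omega, rfl⟩
    · rintro (⟨i, hi, h1, h2⟩ | ⟨i, hi, h1, h2⟩) <;> omega
  rw [h1, Finset.card_union_of_disjoint, Finset.card_image_of_injective,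
    Finset.card_image_of_injective, Finset.card_range]
  · omega
  · intro i j h; simp only [Prod.mk.injEq] at h; omega
  · intro i j h; simp only [Prod.mk.injEq] at h; omega
  · rw [Finset.disjoint_left]
    rintro ⟨x, y⟩ hx hy
    simp only [Finset.mem_image, Finset.mem_range, Prod.mk.injEq] at hx hy
    omega

lemma my_count_cross' (a k : ℕ) (hk : k < a) :
    (((Finset.range k) ×ˢ (Finset.range a)).filter
      fun p : ℕ × ℕ => p.2 = p.1 ∨ p.2 = p.1 + 1).card = 2 * k := by
  have h1 : ((Finset.range k) ×ˢ (Finset.range a)).filter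
      (fun p : ℕ × ℕ => p.2 = p.1 ∨ p.2 = p.1 + 1)
      = ((Finset.range k).image fun i => (i, i)) ∪
        ((Finset.range k).image fun i => (i, i+1)) := by
    ext ⟨x, y⟩
    simp only [Finset.mem_filter, Finset.mem_product, Finset.mem_range, Finset.mem_union,
      Finset.mem_image, Prod.mk.injEq]
    constructor
    · rintro ⟨⟨hx, hy⟩, (h | h)⟩
      · exact Or.inl ⟨x, by omega, rfl, by omega⟩
      · exact Or.inr ⟨x, by omega, rfl, by omega⟩
    · rintro (⟨i, hi, h1, h2⟩ | ⟨i, hi, h1, h2⟩) <;> omega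
  rw [h1, Finset.card_union_of_disjoint, Finset.card_image_of_injective,
    Finset.card_image_of_injective, Finset.card_range]
  · omega
  · intro i j h; simp only [Prod.mk.injEq] at h; omega
  · intro i j h; simp only [Prod.mk.injEq] at h; omega
  · rw [Finset.disjoint_left]
    rintro ⟨x, y⟩ hx hy
    simp only [Finset.mem_image, Finset.mem_range, Prod.mk.injEq] at hx hy
    omega

/-- bottom-row site -/
def pbs (p i : ℕ) : Pt := ((i : ℝ), eS p 1)

/-- top-row site -/
def pts (p i : ℕ) : Pt := ((i : ℝ) + 1/2, eS p 1 + Real.sqrt 3 / 2)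

lemma dE_self (x : Pt) : dE x x = 0 := by simp [dE]

lemma dE_bb (p i j : ℕ) : dE (pbs p i) (pbs p j) = |(i:ℝ) - j| := by
  simp [dE, pbs, Real.sqrt_sq_eq_abs]

lemma dE_tt (p i j : ℕ) : dE (pts p i) (pts p j) = |(i:ℝ) - j| := by
  have h1 : ((i:ℝ) + 1/2) - ((j:ℝ) + 1/2) = (i:ℝ) - j := by ring
  simp [dE, pts, h1, Real.sqrt_sq_eq_abs]

lemma dE_bt (p i j : ℕ) :
    dE (pbs p i) (pts p j) = Real.sqrt (((i:ℝ) - j - 1/2)^2 + 3/4) := by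
  have h2 : (eS p 1 - (eS p 1 + Real.sqrt 3 / 2))^2 = 3/4 := by
    have : (eS p 1 - (eS p 1 + Real.sqrt 3 / 2))^2 = (Real.sqrt 3)^2 / 4 := by ring
    rw [this, Real.sq_sqrt (by norm_num : (3:ℝ) ≥ 0)]
  have h1 : ((i:ℝ) - ((j:ℝ) + 1/2)) = (i:ℝ) - j - 1/2 := by ring
  simp only [dE, pbs, pts, h1, h2]

lemma dE_comm (x y : Pt) : dE x y = dE y x := by
  unfold dE
  rw [show (x.1-y.1)^2 = (y.1-x.1)^2 by ring, show (x.2-y.2)^2 = (y.2-x.2)^2 by ring]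

lemma abs_cast_sub_one (i j : ℕ) (h : i ≠ j) : 1 ≤ |(i:ℝ) - j| := by
  rcases lt_or_gt_of_ne h with h | h
  · have : (i:ℝ) + 1 ≤ j := by exact_mod_cast h
    exact le_abs.2 (Or.inr (by linarith))
  · have : (j:ℝ) + 1 ≤ i := by exact_mod_cast h
    exact le_abs.2 (Or.inl (by linarith))

lemma dE_bb_eq_one (p i j : ℕ) :
    dE (pbs p i) (pbs p j) = 1 ↔ (i = j + 1 ∨ j = i + 1) := by
  rw [dE_bb, abs_eq (by norm_num : (0:ℝ) ≤ 1)]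
  constructor
  · rintro (h | h)
    · left; have : (i:ℝ) = (j:ℝ) + 1 := by linarith
      exact_mod_cast this
    · right; have : (j:ℝ) = (i:ℝ) + 1 := by linarith
      exact_mod_cast this
  · rintro (rfl | rfl) <;> push_cast <;> [left; right] <;> ring

lemma dE_tt_eq_one (p i j : ℕ) :
    dE (pts p i) (pts p j) = 1 ↔ (i = j + 1 ∨ j = i + 1) := by
  rw [dE_tt, ← dE_bb p i j, dE_bb_eq_one]

lemma one_le_dE_bt (p i j : ℕ) : 1 ≤ dE (pbs p i) (pts p j) := by
  rw [dE_bt]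
  have h1 : (1:ℝ) ≤ ((i:ℝ) - j - 1/2)^2 + 3/4 := by
    rcases le_or_gt i j with h | h
    · have : (i:ℝ) ≤ j := by exact_mod_cast h
      nlinarith
    · have : (j:ℝ) + 1 ≤ i := by exact_mod_cast h
      nlinarith
  calc (1:ℝ) = Real.sqrt 1 := Real.sqrt_one.symm
    _ ≤ _ := Real.sqrt_le_sqrt h1

lemma dE_bt_eq_one (p i j : ℕ) :
    dE (pbs p i) (pts p j) = 1 ↔ (i = j ∨ i = j + 1) := by
  rw [dE_bt, Real.sqrt_eq_one]
  constructor
  · intro h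
    have h2 : (((i:ℝ) - j - 1/2) - 1/2) * (((i:ℝ) - j - 1/2) + 1/2) = 0 := by nlinarith
    rcases mul_eq_zero.1 h2 with h3 | h3
    · right; have : (i:ℝ) = (j:ℝ) + 1 := by linarith
      exact_mod_cast this
    · left; have : (i:ℝ) = (j:ℝ) := by linarith
      exact_mod_cast this
  · rintro (rfl | rfl) <;> push_cast <;> ring_nf <;> norm_num

lemma pbs_inj (p : ℕ) : Function.Injective (pbs p) := by
  intro i j h
  have := congrArg Prod.fst h
  simpa [pbs] using Nat.cast_injective this

lemma pts_inj (p : ℕ) : Function.Injective (pts p) := by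
  intro i j h
  have h1 : (i:ℝ) + 1/2 = (j:ℝ) + 1/2 := congrArg Prod.fst h
  have : (i:ℝ) = j := by linarith
  exact_mod_cast this

lemma pbs_ne_pts (p i j : ℕ) : pbs p i ≠ pts p j := by
  intro h
  have h2 : eS p 1 = eS p 1 + Real.sqrt 3 / 2 := congrArg Prod.snd h
  have h3 : Real.sqrt 3 > 0 := Real.sqrt_pos.2 (by norm_num)
  linarith

lemma pbs_mem_bLFS (p i : ℕ) : pbs p i ∈ bLFS p 1 := by
  exact ⟨(i:ℤ), by simp [pbs]⟩

lemma pts_notMem_bLFS (p i : ℕ) : pts p i ∉ bLFS p 1 := by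
  rintro ⟨k, hk⟩
  have h1 := congrArg Prod.fst hk
  simp only [pts] at h1
  have h2 : ((2*k : ℤ) : ℝ) = ((2*(i:ℤ)+1 : ℤ) : ℝ) := by push_cast; push_cast at h1; linarith
  have := Int.cast_injective (α := ℝ) h2
  omega

lemma pbs_mem_LF (p i : ℕ) : pbs p i ∈ LF p 1 := by
  refine ⟨(i:ℤ), 0, ?_⟩
  simp [pbs, t1, t2, Prod.ext_iff]

lemma pts_mem_LF (p i : ℕ) : pts p i ∈ LF p 1 := by
  refine ⟨(i:ℤ), 1, ?_⟩
  simp [pts, t1, t2, Prod.ext_iff]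

lemma vF_of_one_le (cF : ℝ) {r : ℝ} (hr : 1 ≤ r) :
    vF cF r = (((if r = 1 then -cF else 0) : ℝ) : EReal) := by
  rw [vF, if_neg (not_lt.2 hr)]
  split_ifs <;> simp

end Aux
section Key

lemma dE_tb_eq_one (p i j : ℕ) :
    dE (pts p i) (pbs p j) = 1 ↔ (j = i ∨ j = i + 1) := by
  rw [dE_comm, dE_bt_eq_one]

lemma my_sum_adj (a : ℕ) (c : ℝ) :
    (∑ i ∈ Finset.range a, ∑ j ∈ Finset.range a,
        if (i = j + 1 ∨ j = i + 1) then c else 0) = ((2*(a-1) : ℕ) : ℝ) * c := by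
  rw [← Finset.sum_product', Finset.sum_ite, Finset.sum_const, Finset.sum_const_zero,
    add_zero, nsmul_eq_mul]
  congr 2
  rw [← my_count_adj a]

lemma my_sum_cross (a k : ℕ) (hk : k < a) (c : ℝ) :
    (∑ i ∈ Finset.range a, ∑ j ∈ Finset.range k,
        if (i = j ∨ i = j + 1) then c else 0) = ((2*k : ℕ) : ℝ) * c := by
  rw [← Finset.sum_product', Finset.sum_ite, Finset.sum_const, Finset.sum_const_zero,
    add_zero, nsmul_eq_mul]
  congr 2
  rw [← my_count_cross a k hk]

lemma my_sum_cross' (a k : ℕ) (hk : k < a) (c : ℝ) :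
    (∑ i ∈ Finset.range k, ∑ j ∈ Finset.range a,
        if (j = i ∨ j = i + 1) then c else 0) = ((2*k : ℕ) : ℝ) * c := by
  rw [← Finset.sum_product', Finset.sum_ite, Finset.sum_const, Finset.sum_const_zero,
    add_zero, nsmul_eq_mul]
  congr 2
  rw [← my_count_cross' a k hk]

lemma bond_sum (cF : ℝ) (S : Finset Pt)
    (hge : ∀ x ∈ S, ∀ y ∈ S, x ≠ y → 1 ≤ dE x y) :
    (∑ e ∈ S.offDiag, vF cF (dE e.1 e.2))
      = ((∑ x ∈ S, ∑ y ∈ S, (if dE x y = 1 then -cF else 0) : ℝ) : EReal) := by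
  have h1 : ∑ e ∈ S.offDiag, vF cF (dE e.1 e.2)
      = ∑ e ∈ S.offDiag, (((if dE e.1 e.2 = 1 then -cF else 0 : ℝ)) : EReal) := by
    refine Finset.sum_congr rfl ?_
    intro e he
    rw [Finset.mem_offDiag] at he
    exact vF_of_one_le cF (hge _ he.1 _ he.2.1 he.2.2)
  rw [h1, ← my_ereal_coe_sum]
  congr 1
  rw [← Finset.sum_product']
  apply Finset.sum_subset
  · intro e he; rw [Finset.mem_offDiag] at he; exact Finset.mem_product.2 ⟨he.1, he.2.1⟩
  · intro e he hne
    rw [Finset.mem_product] at he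
    have h2 : e.1 = e.2 := by
      by_contra hne2
      exact hne (Finset.mem_offDiag.2 ⟨he.1, he.2, hne2⟩)
    rw [h2, dE_self]
    norm_num

lemma my_key (cF cS : ℝ) (p n k : ℕ) (hk1 : 1 ≤ k) (hk2 : 2*k + 1 ≤ n)
    (hmin : ∀ Dw : Finset Pt, IsConsecutive p 1 n Dw →
      ∀ D ∈ Cn p 1 n, Vn cF cS p 1 Dw ≤ Vn cF cS p 1 D) :
    2 * cF * (2 * (k:ℝ) - 1) ≤ cS * k := by
  classical
  set a := n - k with ha
  have hka : k < a := by omega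
  set B := (Finset.range a).image (pbs p) with hB
  set T := (Finset.range k).image (pts p) with hT
  set Dw := (Finset.range n).image (pbs p) with hDw
  have hBT : Disjoint B T := by
    rw [Finset.disjoint_left]
    rintro x hx hx'
    obtain ⟨i, _, rfl⟩ := Finset.mem_image.1 hx
    obtain ⟨j, _, hj⟩ := Finset.mem_image.1 hx'
    exact pbs_ne_pts p i j hj.symm
  -- the wetting configuration is consecutive
  have hmonad : ((do let i ← Finset.range n; pure ((i:ℝ))) : Finset ℝ)
      = (Finset.range n).image Nat.cast := by
    ext x; simp [Bind.bind, Pure.pure]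
  have hcons : IsConsecutive p 1 n Dw := by
    refine ⟨pbs p 0, pbs_mem_bLFS p 0, ?_⟩
    rw [hmonad, Finset.image_image, hDw]
    apply Finset.image_congr
    intro i _
    simp [pbs, t1, Prod.ext_iff]
  -- the competitor is admissible
  have hDC : B ∪ T ∈ Cn p 1 n := by
    refine ⟨?_, ?_⟩
    · intro x hx
      rcases Finset.mem_union.1 (Finset.mem_coe.1 hx) with h | h
      · obtain ⟨i, _, rfl⟩ := Finset.mem_image.1 h; exact pbs_mem_LF p i
      · obtain ⟨i, _, rfl⟩ := Finset.mem_image.1 h; exact pts_mem_LF p i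
    · rw [Finset.card_union_of_disjoint hBT, hB, hT,
        Finset.card_image_of_injective _ (pbs_inj p),
        Finset.card_image_of_injective _ (pts_inj p),
        Finset.card_range, Finset.card_range]
      omega
  -- minimal distances
  have hDwge : ∀ x ∈ Dw, ∀ y ∈ Dw, x ≠ y → 1 ≤ dE x y := by
    intro x hx y hy hxy
    obtain ⟨i, _, rfl⟩ := Finset.mem_image.1 hx
    obtain ⟨j, _, rfl⟩ := Finset.mem_image.1 hy
    rw [dE_bb]
    exact abs_cast_sub_one i j (fun hij => hxy (by rw [hij]))
  have hDge : ∀ x ∈ B ∪ T, ∀ y ∈ B ∪ T, x ≠ y → 1 ≤ dE x y := by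
    intro x hx y hy hxy
    rcases Finset.mem_union.1 hx with h | h <;> rcases Finset.mem_union.1 hy with h' | h'
    · obtain ⟨i, _, rfl⟩ := Finset.mem_image.1 h
      obtain ⟨j, _, rfl⟩ := Finset.mem_image.1 h'
      rw [dE_bb]
      exact abs_cast_sub_one i j (fun hij => hxy (by rw [hij]))
    · obtain ⟨i, _, rfl⟩ := Finset.mem_image.1 h
      obtain ⟨j, _, rfl⟩ := Finset.mem_image.1 h'
      exact one_le_dE_bt p i j
    · obtain ⟨i, _, rfl⟩ := Finset.mem_image.1 h
      obtain ⟨j, _, rfl⟩ := Finset.mem_image.1 h'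
      rw [dE_comm]
      exact one_le_dE_bt p j i
    · obtain ⟨i, _, rfl⟩ := Finset.mem_image.1 h
      obtain ⟨j, _, rfl⟩ := Finset.mem_image.1 h'
      rw [dE_tt]
      exact abs_cast_sub_one i j (fun hij => hxy (by rw [hij]))
  -- bond sums
  have bondDw : (∑ x ∈ Dw, ∑ y ∈ Dw, (if dE x y = 1 then (-cF) else 0))
      = ((2*(n-1) : ℕ) : ℝ) * (-cF) := by
    rw [hDw, Finset.sum_image (fun x _ y _ h => pbs_inj p h)]
    have hin : ∀ i ∈ Finset.range n,
        (∑ y ∈ (Finset.range n).image (pbs p), (if dE (pbs p i) y = 1 then (-cF) else 0))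
          = ∑ j ∈ Finset.range n, (if dE (pbs p i) (pbs p j) = 1 then (-cF) else 0) :=
      fun i _ => Finset.sum_image (fun x _ y _ h => pbs_inj p h)
    rw [Finset.sum_congr rfl hin]
    simp only [dE_bb_eq_one]
    exact my_sum_adj n (-cF)
  have eBB : (∑ x ∈ B, ∑ y ∈ B, (if dE x y = 1 then (-cF) else 0))
      = ((2*(a-1) : ℕ) : ℝ) * (-cF) := by
    rw [hB, Finset.sum_image (fun x _ y _ h => pbs_inj p h)]
    have hin : ∀ i ∈ Finset.range a,
        (∑ y ∈ (Finset.range a).image (pbs p), (if dE (pbs p i) y = 1 then (-cF) else 0))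
          = ∑ j ∈ Finset.range a, (if dE (pbs p i) (pbs p j) = 1 then (-cF) else 0) :=
      fun i _ => Finset.sum_image (fun x _ y _ h => pbs_inj p h)
    rw [Finset.sum_congr rfl hin]
    simp only [dE_bb_eq_one]
    exact my_sum_adj a (-cF)
  have eBT : (∑ x ∈ B, ∑ y ∈ T, (if dE x y = 1 then (-cF) else 0))
      = ((2*k : ℕ) : ℝ) * (-cF) := by
    rw [hB, hT, Finset.sum_image (fun x _ y _ h => pbs_inj p h)]
    have hin : ∀ i ∈ Finset.range a,
        (∑ y ∈ (Finset.range k).image (pts p), (if dE (pbs p i) y = 1 then (-cF) else 0))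
          = ∑ j ∈ Finset.range k, (if dE (pbs p i) (pts p j) = 1 then (-cF) else 0) :=
      fun i _ => Finset.sum_image (fun x _ y _ h => pts_inj p h)
    rw [Finset.sum_congr rfl hin]
    simp only [dE_bt_eq_one]
    exact my_sum_cross a k hka (-cF)
  have eTB : (∑ x ∈ T, ∑ y ∈ B, (if dE x y = 1 then (-cF) else 0))
      = ((2*k : ℕ) : ℝ) * (-cF) := by
    rw [hB, hT, Finset.sum_image (fun x _ y _ h => pts_inj p h)]
    have hin : ∀ i ∈ Finset.range k,
        (∑ y ∈ (Finset.range a).image (pbs p), (if dE (pts p i) y = 1 then (-cF) else 0))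
          = ∑ j ∈ Finset.range a, (if dE (pts p i) (pbs p j) = 1 then (-cF) else 0) :=
      fun i _ => Finset.sum_image (fun x _ y _ h => pbs_inj p h)
    rw [Finset.sum_congr rfl hin]
    simp only [dE_tb_eq_one]
    exact my_sum_cross' a k hka (-cF)
  have eTT : (∑ x ∈ T, ∑ y ∈ T, (if dE x y = 1 then (-cF) else 0))
      = ((2*(k-1) : ℕ) : ℝ) * (-cF) := by
    rw [hT, Finset.sum_image (fun x _ y _ h => pts_inj p h)]
    have hin : ∀ i ∈ Finset.range k,
        (∑ y ∈ (Finset.range k).image (pts p), (if dE (pts p i) y = 1 then (-cF) else 0))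
          = ∑ j ∈ Finset.range k, (if dE (pts p i) (pts p j) = 1 then (-cF) else 0) :=
      fun i _ => Finset.sum_image (fun x _ y _ h => pts_inj p h)
    rw [Finset.sum_congr rfl hin]
    simp only [dE_tt_eq_one]
    exact my_sum_adj k (-cF)
  have bondD : (∑ x ∈ B ∪ T, ∑ y ∈ B ∪ T, (if dE x y = 1 then (-cF) else 0))
      = ((2*(a-1) : ℕ) : ℝ) * (-cF) + ((2*k : ℕ) : ℝ) * (-cF)
        + ((2*k : ℕ) : ℝ) * (-cF) + ((2*(k-1) : ℕ) : ℝ) * (-cF) := by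
    have hsplit : ∀ x : Pt, (∑ y ∈ B ∪ T, (if dE x y = 1 then (-cF) else 0))
        = (∑ y ∈ B, if dE x y = 1 then (-cF) else 0)
          + ∑ y ∈ T, (if dE x y = 1 then (-cF) else 0) :=
      fun x => Finset.sum_union hBT
    rw [Finset.sum_union hBT, Finset.sum_congr rfl (fun x _ => hsplit x),
      Finset.sum_congr rfl (fun x (_ : x ∈ T) => hsplit x),
      Finset.sum_add_distrib, Finset.sum_add_distrib, eBB, eBT, eTB, eTT]
    ring
  -- one-body sums
  have v1Dw : (∑ x ∈ Dw, v1 cS p 1 x) = (n : ℝ) * (-cS) := by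
    rw [hDw, Finset.sum_image (fun x _ y _ h => pbs_inj p h)]
    have hval : ∀ i ∈ Finset.range n, v1 cS p 1 (pbs p i) = -cS := fun i _ => by
      simp only [v1, if_pos (pbs_mem_bLFS p i)]
    rw [Finset.sum_congr rfl hval, Finset.sum_const, Finset.card_range, nsmul_eq_mul]
  have v1D : (∑ x ∈ B ∪ T, v1 cS p 1 x) = (a : ℝ) * (-cS) := by
    rw [Finset.sum_union hBT, hB, hT,
      Finset.sum_image (fun x _ y _ h => pbs_inj p h),
      Finset.sum_image (fun x _ y _ h => pts_inj p h)]
    have hval : ∀ i ∈ Finset.range a, v1 cS p 1 (pbs p i) = -cS := fun i _ => by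
      simp only [v1, if_pos (pbs_mem_bLFS p i)]
    have hval' : ∀ i ∈ Finset.range k, v1 cS p 1 (pts p i) = 0 := fun i _ => by
      simp only [v1, if_neg (pts_notMem_bLFS p i)]
    rw [Finset.sum_congr rfl hval, Finset.sum_congr rfl hval',
      Finset.sum_const, Finset.card_range, nsmul_eq_mul, Finset.sum_const_zero, add_zero]
  -- total energies
  have VDw : Vn cF cS p 1 Dw
      = ((((2*(n-1) : ℕ) : ℝ) * (-cF) + (n : ℝ) * (-cS) : ℝ) : EReal) := by
    rw [Vn, bond_sum cF Dw hDwge, bondDw, v1Dw, ← EReal.coe_add]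
  have VD : Vn cF cS p 1 (B ∪ T)
      = ((((2*(a-1) : ℕ) : ℝ) * (-cF) + ((2*k : ℕ) : ℝ) * (-cF)
        + ((2*k : ℕ) : ℝ) * (-cF) + ((2*(k-1) : ℕ) : ℝ) * (-cF)
        + (a : ℝ) * (-cS) : ℝ) : EReal) := by
    rw [Vn, bond_sum cF (B ∪ T) hDge, bondD, v1D, ← EReal.coe_add]
  have hle := hmin Dw hcons (B ∪ T) hDC
  rw [VDw, VD, EReal.coe_le_coe_iff] at hle
  have c1 : ((2*(n-1) : ℕ) : ℝ) = 2*((n:ℝ) - 1) := by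
    rw [Nat.cast_mul, Nat.cast_sub (show 1 ≤ n by omega)]; norm_num
  have c2 : ((2*(a-1) : ℕ) : ℝ) = 2*((a:ℝ) - 1) := by
    rw [Nat.cast_mul, Nat.cast_sub (show 1 ≤ a by omega)]; norm_num
  have c3 : ((2*(k-1) : ℕ) : ℝ) = 2*((k:ℝ) - 1) := by
    rw [Nat.cast_mul, Nat.cast_sub (show 1 ≤ k by omega)]; norm_num
  have c4 : (a : ℝ) = (n : ℝ) - k := by
    rw [ha, Nat.cast_sub (show k ≤ n by omega)]
  have c5 : ((2*k : ℕ) : ℝ) = 2*(k:ℝ) := by push_cast; ring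
  rw [c1, c2, c3, c5, c4] at hle
  linarith

end Key
/-- for `q = 1`, if along a strictly increasing sequence of numbers of
atoms the consecutive wetting configurations are minimizers, then `c_S ≥ 4 c_F`. -/
theorem wetting_necessity_q_eq_one
    (cF cS : ℝ) (hcF : 0 < cF) (hcS : 0 < cS)
    (p q : ℕ) (hp : 0 < p) (hq : 0 < q) (hpq : Nat.Coprime p q) (hq1 : q = 1)
    (nk : ℕ → ℕ) (hmono : StrictMono nk) (hpos : ∀ k, 0 < nk k)
    (hmin : ∀ k, ∀ Dw : Finset Pt, IsConsecutive p q (nk k) Dw →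
      ∀ D ∈ Cn p q (nk k), Vn cF cS p q Dw ≤ Vn cF cS p q D) :
    4 * cF ≤ cS := by
  subst hq1
  by_contra hlt
  push_neg at hlt
  have hε : 0 < 4*cF - cS := by linarith
  set N := ⌈2*cF / (4*cF - cS)⌉₊ + 1 with hN
  have hN1 : 1 ≤ N := by omega
  set K := 2*N + 2 with hK
  have hnK : K ≤ nk K := hmono.le_apply
  set n := nk K with hn
  set k := (n - 1)/2 with hk
  have hk1 : 1 ≤ k := by omega
  have hk2 : 2*k + 1 ≤ n := by omega
  have hkN : N ≤ k := by omega
  have hkey := my_key cF cS p n k hk1 hk2 (hmin K)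
  have hNk : (N:ℝ) ≤ (k:ℝ) := by exact_mod_cast hkN
  have hceil : 2*cF/(4*cF - cS) < (N:ℝ) := by
    have h1 := Nat.le_ceil (2*cF/(4*cF - cS))
    have h2 : (N:ℝ) = (⌈2*cF / (4*cF - cS)⌉₊ : ℝ) + 1 := by rw [hN]; push_cast; ring
    linarith
  have h3 : 2*cF < (N:ℝ) * (4*cF - cS) := (div_lt_iff₀ hε).1 hceil
  have h4 : (N:ℝ) * (4*cF - cS) ≤ (k:ℝ) * (4*cF - cS) :=
    mul_le_mul_of_nonneg_right hNk (le_of_lt hε)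
  nlinarith
end
end

section
/- For every n ∈ ℕ and every configuration D_n ∈ C_n, the following decomposition inequality holds: 6c_F n + V_n(D_n) ≥ Σ_{x ∈ D_n ∩ ∂L_{FS}} E_strip(x) + Σ_{x ∈ D_n \ S(∂L_{FS})} E_loc(x). -/
open scoped BigOperators Classical Topology ENNReal
open Filter MeasureTheory

noncomputable section

/-!
Counting every film bond from both of its ends gives
`6 c_F n + V_n(D_n) ≥ Σ_{x ∈ D_n} E_loc(x) - c_S #(D_n ∩ ∂L_{FS})`, and each `E_loc` is
nonnegative because a site of the triangular lattice has at most six neighbours at distance `1`.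
Each `E_strip(x) + c_S` is a weighted sum of the `E_loc(y)` over the sites `y` of the strip of `x`,
so it suffices that for every fixed `y` the weights of all strips add up to at most `1`. A site of
the bottom row is shared by at most three strips, with full weight only when `q ≠ 1`, where two
neighbouring bottom sites cannot both lie on `∂L_{FS}`. A site above the bottom row is reached
either by the strip directly below it or by the strips at horizontal distance `½`, and the weights
`w_±` halve the latter exactly when both of them reach it.
-/

lemma exists_int_of_mem_LF {p q : ℕ} {x z : Pt} (hx : x ∈ LF p q) (hz : z ∈ LF p q) :
    ∃ a b : ℤ, z = x + (a : ℝ) • t1 + (b : ℝ) • t2 := by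
  obtain ⟨k₁, k₂, rfl⟩ := hx
  obtain ⟨m₁, m₂, rfl⟩ := hz
  refine ⟨m₁ - k₁, (m₂ : ℤ) - k₂, ?_⟩
  push_cast
  module

lemma dE_add_smul_t1_add_smul_t2 (x : Pt) (a b : ℝ) :
    dE x (x + a • t1 + b • t2) = √(a ^ 2 + a * b + b ^ 2) := by
  have h3 : √3 ^ 2 = 3 := Real.sq_sqrt (by norm_num)
  simp only [dE, t1, t2, Prod.fst_add, Prod.snd_add, Prod.smul_fst, Prod.smul_snd, smul_eq_mul]
  congr 1
  linear_combination (b ^ 2 / 4) * h3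

def hexUnits : Finset (ℤ × ℤ) := {(1, 0), (-1, 0), (0, 1), (0, -1), (-1, 1), (1, -1)}

lemma mem_hexUnits_of_sq_add_mul_add_sq_eq_one {a b : ℤ} (h : a ^ 2 + a * b + b ^ 2 = 1) :
    (a, b) ∈ hexUnits := by
  have hb1 : -1 ≤ b := by nlinarith [sq_nonneg (2 * a + b), sq_nonneg (b + 1)]
  have hb2 : b ≤ 1 := by nlinarith [sq_nonneg (2 * a + b), sq_nonneg (b - 1)]
  have ha1 : -1 ≤ a := by nlinarith [sq_nonneg (a + 2 * b), sq_nonneg (a + 1)]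
  have ha2 : a ≤ 1 := by nlinarith [sq_nonneg (a + 2 * b), sq_nonneg (a - 1)]
  interval_cases a <;> interval_cases b <;> simp_all [hexUnits]

lemma mem_image_hexUnits_of_dE_eq_one {p q : ℕ} {x z : Pt} (hx : x ∈ LF p q) (hz : z ∈ LF p q)
    (h : dE x z = 1) : z ∈ hexUnits.image fun ab => x + (ab.1 : ℝ) • t1 + (ab.2 : ℝ) • t2 := by
  obtain ⟨a, b, rfl⟩ := exists_int_of_mem_LF hx hz
  rw [dE_add_smul_t1_add_smul_t2, Real.sqrt_eq_one] at h
  exact Finset.mem_image_of_mem _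
    (mem_hexUnits_of_sq_add_mul_add_sq_eq_one (by exact_mod_cast h))

lemma card_neighbours_le_six {p q : ℕ} {D : Finset Pt} (hD : ↑D ⊆ LF p q) {x : Pt}
    (hx : x ∈ LF p q) : (D.filter fun y => dE x y = 1).card ≤ 6 :=
  calc (D.filter fun y => dE x y = 1).card
      ≤ (hexUnits.image fun ab => x + (ab.1 : ℝ) • t1 + (ab.2 : ℝ) • t2).card :=
        Finset.card_le_card fun _ hz =>
          mem_image_hexUnits_of_dE_eq_one hx (hD (Finset.mem_filter.1 hz).1)
            (Finset.mem_filter.1 hz).2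
    _ ≤ hexUnits.card := Finset.card_image_le
    _ = 6 := rfl

lemma Eloc_nonneg {cF : ℝ} (hcF : 0 ≤ cF) {p q : ℕ} {D : Finset Pt} (hD : ↑D ⊆ LF p q)
    (x : Pt) : 0 ≤ Eloc cF D x := by
  unfold Eloc
  split_ifs with hx
  · have h6 : ((D.filter fun y => dE x y = 1).card : ℝ) ≤ 6 := by
      exact_mod_cast card_neighbours_le_six hD (hD hx)
    exact mul_nonneg hcF (by linarith)
  · exact le_rfl

lemma snd_eq_eS_of_mem_bLFS {p q : ℕ} {x : Pt} (hx : x ∈ bLFS p q) : x.2 = eS p q := by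
  obtain ⟨k, rfl⟩ := hx; rfl

lemma eq_mk_eS_of_mem_bLFS {p q : ℕ} {x : Pt} (hx : x ∈ bLFS p q) : x = (x.1, eS p q) := by
  obtain ⟨k, rfl⟩ := hx; rfl

lemma fst_ne_add_half_of_mem_bLFS {p q : ℕ} {x x' : Pt} (hx : x ∈ bLFS p q)
    (hx' : x' ∈ bLFS p q) : x'.1 ≠ x.1 + 1 / 2 := by
  obtain ⟨k, rfl⟩ := hx
  obtain ⟨k', rfl⟩ := hx'
  intro h
  have : ((2 * ((k' - k) * q) : ℤ) : ℝ) = 1 := by push_cast; linarith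
  have : 2 * ((k' - k) * q) = 1 := by exact_mod_cast this
  omega

lemma q_eq_one_of_add_t1_mem_bLFS {p q : ℕ} {x : Pt} (hx : x ∈ bLFS p q)
    (hx' : x + t1 ∈ bLFS p q) : q = 1 := by
  obtain ⟨k, rfl⟩ := hx
  obtain ⟨k', hk'⟩ := hx'
  have h : (((k' - k) * q : ℤ) : ℝ) = 1 := by
    have := congrArg Prod.fst hk'
    simp only [t1, Prod.fst_add] at this
    push_cast; linarith
  have : ((k' - k) * q : ℤ) = 1 := by exact_mod_cast h
  exact_mod_cast Int.eq_one_of_mul_eq_one_left (by positivity) this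

lemma finite_column (D : Finset Pt) (x : Pt) : {y : ℝ | ((x.1, y) : Pt) ∈ D}.Finite :=
  D.finite_toSet.preimage (Prod.mk_right_injective x.1).injOn

lemma til_mem {D : Finset Pt} {x : Pt} (hx : x ∈ D) : til D x ∈ D :=
  Set.Nonempty.csSup_mem (s := {y : ℝ | ((x.1, y) : Pt) ∈ D}) ⟨x.2, hx⟩ (finite_column D x)

lemma le_yM {D : Finset Pt} {x : Pt} (hx : x ∈ D) : x.2 ≤ yM D x :=
  le_csSup (finite_column D x).bddAbove hx

lemma sum_ite_eq_mul {ι R : Type*} [DecidableEq ι] [NonUnitalNonAssocSemiring R] {s : Finset ι}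
    {g : ι → R} {z : ι} (c : R) (hz : z ∉ s → g z = 0) :
    ∑ y ∈ s, (if y = z then c else 0) * g y = c * g z := by
  simp only [ite_mul, zero_mul, Finset.sum_ite_eq']
  split_ifs with h
  · rfl
  · rw [hz h, mul_zero]

lemma sum_eq_ite_of_ne_zero {ι M : Type*} [DecidableEq ι] [AddCommMonoid M] {s : Finset ι}
    {f : ι → M} {a : ι} (h : ∀ x ∈ s, f x ≠ 0 → x = a) :
    ∑ x ∈ s, f x = if a ∈ s then f a else 0 := by
  split_ifs with ha
  · exact Finset.sum_eq_single_of_mem a ha fun x hx hxa => by_contra fun hfx => hxa (h x hx hfx)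
  · exact Finset.sum_eq_zero fun x hx => by_contra fun hfx => ha (h x hx hfx ▸ hx)

def belowScale (q : ℕ) : ℝ := if q = 1 then 1 / 2 else 1

def lowerWeight (q : ℕ) (x y : Pt) : ℝ :=
  (if y = x then belowScale q else 0) + (if y = x + t1 then belowScale q / 2 else 0) +
    (if y = x - t1 then belowScale q / 2 else 0)

def upperWeight (p q : ℕ) (D : Finset Pt) (x y : Pt) : ℝ :=
  (if y = til D x then (if til D x ≠ x then 1 else 0) else 0) +
    (if y = til D x + t2 then wPlus p q D x else 0) +
    (if y = til D x + t2 - t1 then wMinus p q D x else 0)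

/-- `E_loc(y)` enters `E_strip(x) + c_S` with the coefficient `stripWeight p q D x y`. -/
def stripWeight (p q : ℕ) (D : Finset Pt) (x y : Pt) : ℝ :=
  lowerWeight q x y + upperWeight p q D x y

lemma sum_stripWeight_mul_Eloc (cF cS : ℝ) {p q : ℕ} {D : Finset Pt} {x : Pt} (hxD : x ∈ D)
    (hx : x ∈ bLFS p q) :
    ∑ y ∈ SLFS p q D, stripWeight p q D x y * Eloc cF D y = EStrip cF cS p q D x + cS := by
  have hsite : ∀ z, (z = x ∨ z = x + t1 ∨ z = x - t1 ∨ z = til D x ∨ z = til D x + t2 ∨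
      z = til D x + t2 - t1) → z ∉ SLFS p q D → Eloc cF D z = 0 :=
    fun z hz hzS => if_neg fun hzD => hzS (Finset.mem_filter.2 ⟨hzD, x, hxD, hx, hz⟩)
  simp only [stripWeight, lowerWeight, upperWeight, add_mul, Finset.sum_add_distrib]
  rw [sum_ite_eq_mul _ (hsite x (by simp)), sum_ite_eq_mul _ (hsite (x + t1) (by simp)),
    sum_ite_eq_mul _ (hsite (x - t1) (by simp)), sum_ite_eq_mul _ (hsite (til D x) (by simp)),
    sum_ite_eq_mul _ (hsite (til D x + t2) (by simp)),
    sum_ite_eq_mul _ (hsite (til D x + t2 - t1) (by simp))]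
  simp only [EStrip, EStripBelow, EStripAbove, belowScale, boole_mul]
  split_ifs <;> ring

lemma sum_lowerWeight (q : ℕ) (F : Finset Pt) (y : Pt) :
    ∑ x ∈ F, lowerWeight q x y = (if y ∈ F then belowScale q else 0) +
      (if y - t1 ∈ F then belowScale q / 2 else 0) +
      (if y + t1 ∈ F then belowScale q / 2 else 0) := by
  simp only [lowerWeight, Finset.sum_add_distrib, ← sub_eq_iff_eq_add, eq_sub_iff_add_eq,
    Finset.sum_ite_eq]

lemma sum_lowerWeight_le_one {p q : ℕ} {F : Finset Pt} (hF : ↑F ⊆ bLFS p q) (y : Pt) :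
    ∑ x ∈ F, lowerWeight q x y ≤ 1 := by
  rw [sum_lowerWeight]
  by_cases hq : q = 1
  · simp only [belowScale, if_pos hq]
    split_ifs <;> norm_num
  · have hcenter : y ∈ F → y - t1 ∉ F ∧ y + t1 ∉ F := fun hy =>
      ⟨fun h => hq (q_eq_one_of_add_t1_mem_bLFS (hF h) (by simpa using hF hy)),
        fun h => hq (q_eq_one_of_add_t1_mem_bLFS (hF hy) (hF h))⟩
    simp only [belowScale, if_neg hq]
    by_cases hy : y ∈ F
    · rw [if_pos hy, if_neg (hcenter hy).1, if_neg (hcenter hy).2]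
      norm_num
    · rw [if_neg hy]
      split_ifs <;> norm_num

lemma sum_lowerWeight_eq_zero {p q : ℕ} {F : Finset Pt} (hF : ↑F ⊆ bLFS p q) {y : Pt}
    (hy : y.2 ≠ eS p q) : ∑ x ∈ F, lowerWeight q x y = 0 := by
  have hnot : ∀ z ∈ F, z.2 ≠ y.2 := fun z hz h => hy (h ▸ snd_eq_eS_of_mem_bLFS (hF hz))
  rw [sum_lowerWeight, if_neg fun h => hnot _ h rfl, if_neg fun h => hnot _ h (by simp [t1]),
    if_neg fun h => hnot _ h (by simp [t1])]
  norm_num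

lemma wPlus_le_one (p q : ℕ) (D : Finset Pt) (x : Pt) : wPlus p q D x ≤ 1 := by
  unfold wPlus; split_ifs <;> norm_num

lemma wMinus_le_one (p q : ℕ) (D : Finset Pt) (x : Pt) : wMinus p q D x ≤ 1 := by
  unfold wMinus; split_ifs <;> norm_num

lemma sum_upperWeight_le_one (p q : ℕ) (D : Finset Pt) (y : Pt) :
    ∑ x ∈ D.filter (fun x => x ∈ bLFS p q), upperWeight p q D x y ≤ 1 := by
  set F := D.filter fun x => x ∈ bLFS p q
  have hF : ∀ x ∈ F, x ∈ D ∧ x ∈ bLFS p q := fun x hx => Finset.mem_filter.1 hx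
  set xc : Pt := (y.1, eS p q)
  set xR : Pt := (y.1 - 1 / 2, eS p q)
  -- the only sites of `F` whose strips reach `y` from above are `xc`, `xR` and `xR + t1`
  have hA : (∑ x ∈ F, if y = til D x then (if til D x ≠ x then (1 : ℝ) else 0) else 0) =
      if xc ∈ F then (if y = til D xc then (if til D xc ≠ xc then 1 else 0) else 0) else 0 := by
    refine sum_eq_ite_of_ne_zero fun x hx h => ?_
    rw [eq_mk_eS_of_mem_bLFS (hF x hx).2]
    simp [xc, (ite_ne_right_iff.1 h).1, til]
  have hB : (∑ x ∈ F, if y = til D x + t2 then wPlus p q D x else 0) =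
      if xR ∈ F then (if y = til D xR + t2 then wPlus p q D xR else 0) else 0 := by
    refine sum_eq_ite_of_ne_zero fun x hx h => ?_
    rw [eq_mk_eS_of_mem_bLFS (hF x hx).2]
    simp [xR, (ite_ne_right_iff.1 h).1, til, t2]
  have hC : (∑ x ∈ F, if y = til D x + t2 - t1 then wMinus p q D x else 0) =
      if xR + t1 ∈ F then
        (if y = til D (xR + t1) + t2 - t1 then wMinus p q D (xR + t1) else 0) else 0 := by
    refine sum_eq_ite_of_ne_zero fun x hx h => ?_
    rw [eq_mk_eS_of_mem_bLFS (hF x hx).2]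
    ext <;> simp [xR, (ite_ne_right_iff.1 h).1, til, t1, t2]; ring
  simp only [upperWeight, Finset.sum_add_distrib]
  rw [hA, hB, hC]
  by_cases hc : xc ∈ F
  · have hR : xR ∉ F := fun h =>
      fst_ne_add_half_of_mem_bLFS (hF _ h).2 (hF _ hc).2 (by simp [xR, xc])
    have hL : xR + t1 ∉ F := fun h =>
      fst_ne_add_half_of_mem_bLFS (hF _ hc).2 (hF _ h).2 (by simp [xR, xc, t1]; ring)
    rw [if_pos hc, if_neg hR, if_neg hL]
    split_ifs <;> norm_num
  rw [if_neg hc, zero_add]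
  by_cases hpair : xR ∈ F ∧ xR + t1 ∈ F ∧ y = til D xR + t2 ∧ y = til D (xR + t1) + t2 - t1
  · obtain ⟨hR, hL, hyR, hyL⟩ := hpair
    have hwPlus : wPlus p q D xR = 1 / 2 := if_pos ⟨(hF _ hL).1, (hF _ hL).2, hyR.symm.trans hyL⟩
    have hwMinus : wMinus p q D (xR + t1) = 1 / 2 := by
      refine if_pos ⟨?_, ?_, ?_⟩ <;> simp only [add_sub_cancel_right]
      exacts [(hF _ hR).1, (hF _ hR).2, hyL.symm.trans hyR]
    rw [if_pos hR, if_pos hL, if_pos hyR, if_pos hyL, hwPlus, hwMinus]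
    norm_num
  · have := wPlus_le_one p q D xR
    have := wMinus_le_one p q D (xR + t1)
    split_ifs <;> first | exact absurd ⟨‹_›, ‹_›, ‹_›, ‹_›⟩ hpair | linarith

lemma sum_upperWeight_eq_zero (p q : ℕ) (D : Finset Pt) {y : Pt} (hy : y.2 = eS p q) :
    ∑ x ∈ D.filter (fun x => x ∈ bLFS p q), upperWeight p q D x y = 0 := by
  refine Finset.sum_eq_zero fun x hx => ?_
  obtain ⟨hxD, hx⟩ := Finset.mem_filter.1 hx
  have hx2 := snd_eq_eS_of_mem_bLFS hx
  have hlow : y.2 < yM D x + √3 / 2 := by linarith [le_yM hxD, show 0 < √3 / 2 by positivity]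
  have htop : y = til D x → til D x = x := fun h => Prod.ext rfl (by rw [← h, hy, hx2])
  have hA : (if y = til D x then (if til D x ≠ x then (1 : ℝ) else 0) else 0) = 0 := by
    by_cases h : y = til D x
    · rw [if_pos h, if_neg (not_not.2 (htop h))]
    · rw [if_neg h]
  rw [upperWeight, hA, if_neg fun h => hlow.ne ?_, if_neg fun h => hlow.ne ?_]
  · norm_num
  · rw [h]; simp [til, t1, t2]
  · rw [h]; simp [til, t2]

lemma sum_stripWeight_le_one (p q : ℕ) (D : Finset Pt) (y : Pt) :
    ∑ x ∈ D.filter (fun x => x ∈ bLFS p q), stripWeight p q D x y ≤ 1 := by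
  have hF : ↑(D.filter fun x => x ∈ bLFS p q) ⊆ bLFS p q := fun x hx =>
    (Finset.mem_filter.1 hx).2
  simp only [stripWeight, Finset.sum_add_distrib]
  by_cases hy : y.2 = eS p q
  · rw [sum_upperWeight_eq_zero p q D hy, add_zero]
    exact sum_lowerWeight_le_one hF y
  · rw [sum_lowerWeight_eq_zero hF hy, zero_add]
    exact sum_upperWeight_le_one p q D y

lemma sum_EStrip_add_cS_le_sum_Eloc {cF : ℝ} (hcF : 0 ≤ cF) (cS : ℝ) {p q : ℕ} {D : Finset Pt}
    (hD : ↑D ⊆ LF p q) :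
    ∑ x ∈ D.filter (fun x => x ∈ bLFS p q), (EStrip cF cS p q D x + cS) ≤
      ∑ y ∈ SLFS p q D, Eloc cF D y :=
  calc ∑ x ∈ D.filter (fun x => x ∈ bLFS p q), (EStrip cF cS p q D x + cS)
      = ∑ x ∈ D.filter (fun x => x ∈ bLFS p q),
          ∑ y ∈ SLFS p q D, stripWeight p q D x y * Eloc cF D y :=
        Finset.sum_congr rfl fun x hx =>
          (sum_stripWeight_mul_Eloc cF cS (Finset.mem_filter.1 hx).1
            (Finset.mem_filter.1 hx).2).symm
    _ = ∑ y ∈ SLFS p q D,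
          (∑ x ∈ D.filter (fun x => x ∈ bLFS p q), stripWeight p q D x y) * Eloc cF D y := by
        rw [Finset.sum_comm]
        simp only [Finset.sum_mul]
    _ ≤ ∑ y ∈ SLFS p q D, Eloc cF D y :=
        Finset.sum_le_sum fun y _ =>
          mul_le_of_le_one_left (Eloc_nonneg hcF hD y) (sum_stripWeight_le_one p q D y)

lemma coe_le_vF (cF r : ℝ) : (((if r = 1 then -cF else 0 : ℝ)) : EReal) ≤ vF cF r := by
  unfold vF
  split_ifs <;> simp_all

lemma sum_offDiag_ite_dE_eq_one (cF : ℝ) (D : Finset Pt) :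
    ∑ e ∈ D.offDiag, (if dE e.1 e.2 = 1 then -cF else 0) =
      -cF * ∑ x ∈ D, ((D.filter fun y => dE x y = 1).card : ℝ) := by
  rw [Finset.sum_subset (fun e he => Finset.mem_product.2
      ⟨(Finset.mem_offDiag.1 he).1, (Finset.mem_offDiag.1 he).2.1⟩) fun e he hne => ?_,
    Finset.sum_product, Finset.mul_sum]
  · refine Finset.sum_congr rfl fun x _ => ?_
    rw [Finset.sum_ite, Finset.sum_const_zero, add_zero, Finset.sum_const, nsmul_eq_mul, mul_comm]
  · obtain ⟨he₁, he₂⟩ := Finset.mem_product.1 he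
    have hdiag : e.1 = e.2 := not_not.1 fun h => hne (Finset.mem_offDiag.2 ⟨he₁, he₂, h⟩)
    rw [hdiag, if_neg (by simp [dE])]

lemma coe_sum_Eloc_sub_le_add_Vn (cF cS : ℝ) (p q : ℕ) (D : Finset Pt) :
    ((∑ x ∈ D, Eloc cF D x - cS * (D.filter fun x => x ∈ bLFS p q).card : ℝ) : EReal) ≤
      ((6 * cF * D.card : ℝ) : EReal) + Vn cF cS p q D := by
  have hEloc : ∑ x ∈ D, Eloc cF D x =
      6 * cF * D.card - cF * ∑ x ∈ D, ((D.filter fun y => dE x y = 1).card : ℝ) := by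
    rw [Finset.sum_congr rfl fun x hx =>
      show Eloc cF D x = cF * (6 - ((D.filter fun y => dE x y = 1).card : ℝ)) from if_pos hx]
    simp only [mul_sub, Finset.sum_sub_distrib, Finset.sum_const, nsmul_eq_mul, ← Finset.mul_sum]
    ring
  have hv1 : ∑ x ∈ D, v1 cS p q x = -cS * (D.filter fun x => x ∈ bLFS p q).card := by
    simp only [v1, Finset.sum_ite, Finset.sum_const_zero, add_zero, Finset.sum_const, nsmul_eq_mul]
    ring
  have hcoe : ((∑ e ∈ D.offDiag, (if dE e.1 e.2 = 1 then -cF else 0) : ℝ) : EReal) ≤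
      ∑ e ∈ D.offDiag, vF cF (dE e.1 e.2) :=
    (map_sum ({ toFun := (↑), map_zero' := EReal.coe_zero, map_add' := EReal.coe_add } :
      ℝ →+ EReal) _ _).trans_le (Finset.sum_le_sum fun e _ => coe_le_vF cF _)
  calc ((∑ x ∈ D, Eloc cF D x - cS * (D.filter fun x => x ∈ bLFS p q).card : ℝ) : EReal)
      = ((6 * cF * D.card : ℝ) : EReal) +
          (((∑ e ∈ D.offDiag, (if dE e.1 e.2 = 1 then -cF else 0) : ℝ) : EReal) +
            ((∑ x ∈ D, v1 cS p q x : ℝ) : EReal)) := by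
        rw [← EReal.coe_add, ← EReal.coe_add, sum_offDiag_ite_dE_eq_one, hv1, hEloc]
        ring_nf
    _ ≤ ((6 * cF * D.card : ℝ) : EReal) + Vn cF cS p q D := by
        unfold Vn
        gcongr

theorem strip_decomposition_general
    (cF cS : ℝ) (hcF : 0 < cF)
    (p q : ℕ)
    (n : ℕ) (D : Finset Pt) (hD : D ∈ Cn p q n) :
    (((∑ x ∈ D.filter fun x => x ∈ bLFS p q, EStrip cF cS p q D x) +
        ∑ x ∈ D \ SLFS p q D, Eloc cF D x : ℝ) : EReal) ≤
      ((6 * cF * (n : ℝ) : ℝ) : EReal) + Vn cF cS p q D := by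
  obtain ⟨hDL, rfl⟩ := hD
  refine le_trans (EReal.coe_le_coe_iff.2 ?_) (coe_sum_Eloc_sub_le_add_Vn cF cS p q D)
  have hstrips := sum_EStrip_add_cS_le_sum_Eloc hcF.le cS hDL
  rw [Finset.sum_add_distrib, Finset.sum_const, nsmul_eq_mul] at hstrips
  rw [← Finset.sum_sdiff (s₁ := SLFS p q D) (Finset.filter_subset _ D)]
  linarith

/-- the strip decomposition inequality
`6 c_F n + V_n(D_n) ≥ Σ_{x ∈ D_n ∩ ∂L_{FS}} E_strip(x) + Σ_{x ∈ D_n \ S(∂L_{FS})} E_loc(x)`. -/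
theorem strip_decomposition
    (cF cS : ℝ) (hcF : 0 < cF) (hcS : 0 < cS)
    (p q : ℕ) (hp : 0 < p) (hq : 0 < q) (hpq : Nat.Coprime p q)
    (n : ℕ) (D : Finset Pt) (hD : D ∈ Cn p q n) :
    (((∑ x ∈ D.filter fun x => x ∈ bLFS p q, EStrip cF cS p q D x) +
        ∑ x ∈ D \ SLFS p q D, Eloc cF D x : ℝ) : EReal) ≤
      ((6 * cF * (n : ℝ) : ℝ) : EReal) + Vn cF cS p q D :=
  strip_decomposition_general cF cS hcF p q n D hD
end
end
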